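/- arXiv:1305.1678 — 6 statements merged into one kernel-verified Lean document; each statement's English description precedes it below -/
import Mathlib

section
/- Let V be a vector space over k and U ⊆ T(V) a subspace of the tensor algebra. Then the following are equivalent: (i) for all subspaces W₁, W₂ ⊆ T(V), (U⊗W₁) ∩ (U⊗W₂) = U ⊗ (W₁∩W₂) as subspaces of T(V); (ii) U ∩ (U ⊗ T(V)_{>0}) = 0; (iii) for every finite linearly independent family {u_i} ⊆ U and elements w_i ∈ T(V), if Σ u_i ⊗ w_i = 0 in T(V) then all w_i = 0. -/
open TensorAlgebra Submodule

namespace TIFAux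

variable (k V : Type*) [Field k] [AddCommGroup V] [Module k V]

/-- The degree-one part of the tensor algebra. -/
noncomputable def G : Submodule k (TensorAlgebra k V) :=
  LinearMap.range (TensorAlgebra.ι k (M := V))

/-- The counit of the tensor algebra. -/
noncomputable def ε : TensorAlgebra k V →ₐ[k] k :=
  TensorAlgebra.lift k (0 : V →ₗ[k] k)

variable {k V}

@[simp] lemma ε_ι (v : V) : ε k V (ι k v) = 0 := by
  simp [ε]

@[simp] lemma ε_algebraMap (c : k) : ε k V (algebraMap k (TensorAlgebra k V) c) = c := by
  simpa using (ε k V).commutes c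

variable (k V) in
/-- The matrix representation used to define right deletion operators. -/
noncomputable def L (f : V →ₗ[k] k) : V →ₗ[k] Matrix (Fin 2) (Fin 2) (TensorAlgebra k V) where
  toFun v := Matrix.of ![![ι k v, algebraMap k _ (f v)], ![0, 0]]
  map_add' v w := by
    ext i j
    fin_cases i <;> fin_cases j <;>
      simp [Matrix.add_apply, map_add]
  map_smul' c v := by
    ext i j
    fin_cases i <;> fin_cases j <;>
      simp [Matrix.smul_apply, map_smul, Algebra.smul_def, map_mul]

variable (k V) in
noncomputable def Φ (f : V →ₗ[k] k) :
    TensorAlgebra k V →ₐ[k] Matrix (Fin 2) (Fin 2) (TensorAlgebra k V) :=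
  TensorAlgebra.lift k (L k V f)

variable (k V) in
/-- The right deletion operator associated to a linear functional on `V`. -/
noncomputable def D (f : V →ₗ[k] k) : TensorAlgebra k V →ₗ[k] TensorAlgebra k V :=
  (LinearMap.proj (1 : Fin 2)).comp ((LinearMap.proj (0 : Fin 2)).comp (Φ k V f).toLinearMap)

lemma D_apply (f : V →ₗ[k] k) (x : TensorAlgebra k V) : D k V f x = Φ k V f x 0 1 := rfl

lemma Φ_entries (f : V →ₗ[k] k) (x : TensorAlgebra k V) :
    Φ k V f x 0 0 = x ∧ Φ k V f x 1 0 = 0 ∧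
      Φ k V f x 1 1 = algebraMap k _ (ε k V x) := by
  induction x using TensorAlgebra.induction with
  | algebraMap r =>
      rw [AlgHom.commutes]
      simp [Matrix.algebraMap_matrix_apply]
  | ι v =>
      simp [Φ, TensorAlgebra.lift_ι_apply, L]
  | mul x y hx hy =>
      obtain ⟨hx1, hx2, hx3⟩ := hx
      obtain ⟨hy1, hy2, hy3⟩ := hy
      rw [map_mul]
      refine ⟨?_, ?_, ?_⟩ <;>
        simp [Matrix.mul_apply, Fin.sum_univ_two, hx1, hx2, hx3, hy1, hy2, hy3, map_mul]
  | add x y hx hy =>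
      obtain ⟨hx1, hx2, hx3⟩ := hx
      obtain ⟨hy1, hy2, hy3⟩ := hy
      rw [map_add]
      refine ⟨?_, ?_, ?_⟩ <;> simp [Matrix.add_apply, hx1, hx2, hx3, hy1, hy2, hy3, map_add]

lemma D_mul (f : V →ₗ[k] k) (x y : TensorAlgebra k V) :
    D k V f (x * y) = x * D k V f y + D k V f x * algebraMap k _ (ε k V y) := by
  rw [D_apply, D_apply, D_apply, map_mul, Matrix.mul_apply, Fin.sum_univ_two,
    (Φ_entries f x).1, (Φ_entries f y).2.2]

@[simp] lemma D_ι (f : V →ₗ[k] k) (v : V) :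
    D k V f (ι k v) = algebraMap k _ (f v) := by
  rw [D_apply, Φ, TensorAlgebra.lift_ι_apply]
  simp [L]

lemma D_mul_ι (f : V →ₗ[k] k) (x : TensorAlgebra k V) (v : V) :
    D k V f (x * ι k v) = f v • x := by
  rw [D_mul, D_ι, ε_ι, map_zero, mul_zero, add_zero, ← Algebra.commutes, ← Algebra.smul_def]

variable (k V)

lemma iSup_pow_eq_top : (⨆ m : ℕ, G k V ^ m) = ⊤ := by
  rw [eq_top_iff]
  have hmul : (⨆ m : ℕ, G k V ^ m) * (⨆ m : ℕ, G k V ^ m) ≤ ⨆ m : ℕ, G k V ^ m := by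
    rw [Submodule.iSup_mul]
    refine iSup_le fun a => ?_
    rw [Submodule.mul_iSup]
    refine iSup_le fun b => ?_
    rw [← pow_add]
    exact le_iSup (fun m => G k V ^ m) (a + b)
  have main : ∀ x : TensorAlgebra k V, x ∈ ⨆ m : ℕ, G k V ^ m := by
    intro x
    induction x using TensorAlgebra.induction with
    | algebraMap r =>
        refine le_iSup (fun m => G k V ^ m) 0 ?_
        show _ ∈ G k V ^ 0
        rw [pow_zero]; exact Submodule.algebraMap_mem r
    | ι v =>
        refine le_iSup (fun m => G k V ^ m) 1 ?_
        show _ ∈ G k V ^ 1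
        rw [pow_one]; exact ⟨v, rfl⟩
    | mul x y hx hy => exact hmul (mul_mem_mul hx hy)
    | add x y hx hy => exact add_mem hx hy
  exact fun x _ => main x

lemma top_mul_G_le : (⊤ : Submodule k (TensorAlgebra k V)) * G k V ≤ G k V * ⊤ := by
  conv_lhs => rw [← iSup_pow_eq_top]
  rw [Submodule.iSup_mul]
  refine iSup_le fun m => ?_
  rw [← pow_succ, pow_succ']
  exact mul_le_mul' le_rfl le_top

/-- The filtration of the tensor algebra by degree. -/
noncomputable def F (N : ℕ) : Submodule k (TensorAlgebra k V) :=
  ⨆ m : ℕ, ⨆ _ : m ≤ N, G k V ^ m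

/-- The positive part of the filtration. -/
noncomputable def P (N : ℕ) : Submodule k (TensorAlgebra k V) :=
  ⨆ m : ℕ, ⨆ _ : 1 ≤ m ∧ m ≤ N, G k V ^ m

variable {k V}

lemma pow_le_F {m N : ℕ} (h : m ≤ N) : G k V ^ m ≤ F k V N :=
  le_iSup_of_le m (le_iSup_of_le h le_rfl)

lemma pow_le_P {m N : ℕ} (h1 : 1 ≤ m) (h2 : m ≤ N) : G k V ^ m ≤ P k V N :=
  le_iSup_of_le m (le_iSup_of_le ⟨h1, h2⟩ le_rfl)

lemma F_mono : Monotone (F k V) := fun _ _ h =>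
  iSup_le fun m => iSup_le fun hm => pow_le_F (hm.trans h)

lemma P_zero : P k V 0 = ⊥ :=
  le_bot_iff.mp <| iSup_le fun _ => iSup_le fun hm => absurd (hm.1.trans hm.2) (by omega)

lemma iSup_F_eq_top : (⨆ N : ℕ, F k V N) = ⊤ := by
  rw [eq_top_iff, ← iSup_pow_eq_top (k := k) (V := V)]
  exact iSup_le fun m => le_iSup_of_le m (pow_le_F le_rfl)

lemma ε_pow {m : ℕ} (hm : 1 ≤ m) : ∀ x ∈ G k V ^ m, ε k V x = 0 := by
  obtain ⟨m, rfl⟩ := Nat.exists_eq_add_of_le hm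
  rw [add_comm, pow_succ]
  intro x hx
  refine Submodule.mul_induction_on hx ?_ ?_
  · rintro a _ b ⟨v, rfl⟩
    rw [map_mul, ε_ι, mul_zero]
  · intro x y hx hy
    rw [map_add, hx, hy, add_zero]

lemma D_pow (f : V →ₗ[k] k) (m : ℕ) : ∀ x ∈ G k V ^ (m + 1), D k V f x ∈ G k V ^ m := by
  rw [pow_succ]
  intro x hx
  refine Submodule.mul_induction_on hx ?_ ?_
  · rintro a ha b ⟨v, rfl⟩
    rw [D_mul_ι]
    exact smul_mem _ _ ha
  · intro x y hx hy
    rw [map_add]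
    exact add_mem hx hy

lemma P_le_top_mul {N : ℕ} : P k V N ≤ ⊤ * G k V := by
  refine iSup_le fun m => iSup_le fun hm => ?_
  obtain ⟨m', rfl⟩ := Nat.exists_eq_add_of_le hm.1
  rw [add_comm, pow_succ]
  exact mul_le_mul' le_top le_rfl

lemma sub_const_mem_P {N : ℕ} (x : TensorAlgebra k V) (hx : x ∈ F k V N) :
    x - algebraMap k _ (ε k V x) ∈ P k V N := by
  set φ : TensorAlgebra k V →ₗ[k] TensorAlgebra k V :=
    LinearMap.id - (Algebra.linearMap k (TensorAlgebra k V)).comp (ε k V).toLinearMap with hφ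
  have key : F k V N ≤ (P k V N).comap φ := by
    refine iSup_le fun m => iSup_le fun hm => ?_
    match m with
    | 0 =>
      intro y hy
      rw [pow_zero] at hy
      obtain ⟨c, rfl⟩ := (Submodule.mem_one).mp hy
      simp only [Submodule.mem_comap, hφ, LinearMap.sub_apply, LinearMap.id_apply,
        LinearMap.coe_comp, Function.comp_apply, AlgHom.toLinearMap_apply,
        Algebra.linearMap_apply, ε_algebraMap, sub_self]
      exact zero_mem _
    | m + 1 =>
      intro y hy
      simp only [Submodule.mem_comap, hφ, LinearMap.sub_apply, LinearMap.id_apply,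
        LinearMap.coe_comp, Function.comp_apply, AlgHom.toLinearMap_apply,
        Algebra.linearMap_apply, ε_pow (Nat.succ_le_succ (Nat.zero_le m)) y hy, map_zero,
        sub_zero]
      exact pow_le_P (Nat.succ_le_succ (Nat.zero_le m)) hm hy
  have := key hx
  simpa [hφ] using this

lemma P_le_comap_D (f : V →ₗ[k] k) {N : ℕ} :
    P k V (N + 1) ≤ (F k V N).comap (D k V f) := by
  refine iSup_le fun m => iSup_le fun hm => ?_
  match m, hm with
  | m + 1, hm =>
    intro y hy
    exact pow_le_F (Nat.le_of_succ_le_succ hm.2) (D_pow f m y hy)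

variable (k V) in
variable {J : Type*} in
/-- Writing an element of `T·V` as a combination of basis vectors on the right. -/
noncomputable def Ψ (b : Module.Basis J k V) : (J →₀ TensorAlgebra k V) →ₗ[k] TensorAlgebra k V :=
  Finsupp.lsum k fun j => LinearMap.mulRight k (TensorAlgebra.ι k (b j))

lemma top_mul_G_le_range_Ψ {J : Type*} (b : Module.Basis J k V) :
    (⊤ : Submodule k (TensorAlgebra k V)) * G k V ≤ LinearMap.range (Ψ k V b) := by
  rw [Submodule.mul_le]
  rintro t - x ⟨v, rfl⟩
  refine ⟨(b.repr v).mapRange (· • t) (zero_smul k t), ?_⟩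
  rw [Ψ, Finsupp.lsum_apply, Finsupp.sum_mapRange_index (by simp)]
  simp only [LinearMap.mulRight_apply]
  have : ((b.repr v).sum fun j c => (c • t) * TensorAlgebra.ι k (b j))
      = t * ((b.repr v).sum fun j c => TensorAlgebra.ι k (c • b j)) := by
    rw [Finsupp.sum, Finsupp.sum, Finset.mul_sum]
    refine Finset.sum_congr rfl fun j _ => ?_
    rw [map_smul, smul_mul_assoc, mul_smul_comm]
  rw [this, ← map_finsuppSum]
  congr 1
  conv_rhs => rw [← b.linearCombination_repr v]
  rw [Finsupp.linearCombination_apply]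

lemma D_Ψ {J : Type*} [DecidableEq J] (b : Module.Basis J k V) (g : J →₀ TensorAlgebra k V) (j : J) :
    D k V (b.coord j) (Ψ k V b g) = g j := by
  rw [Ψ, Finsupp.lsum_apply, map_finsuppSum]
  have : (g.sum fun j' t => D k V (b.coord j) (LinearMap.mulRight k (TensorAlgebra.ι k (b j')) t))
      = g.sum fun j' t => if j' = j then t else 0 := by
    refine Finsupp.sum_congr fun j' _ => ?_
    rw [LinearMap.mulRight_apply, D_mul_ι, Module.Basis.coord_apply, Module.Basis.repr_self,
      Finsupp.single_apply, ite_smul, one_smul, zero_smul]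
  rw [this, Finsupp.sum]
  rw [Finset.sum_ite_eq' g.support j (fun j' => g j')]
  split_ifs with h
  · rfl
  · exact (Finsupp.notMem_support_iff.mp h).symm

section key

variable {U : Submodule k (TensorAlgebra k V)}

lemma step1 (hU : U ⊓ (U * (G k V * ⊤)) = ⊥) {N n : ℕ} {u w : Fin n → TensorAlgebra k V}
    (hu : ∀ i, u i ∈ U) (hind : LinearIndependent k u) (hw : ∀ i, w i ∈ F k V N)
    (hsum : ∑ i, u i * w i = 0) : ∀ i, w i ∈ P k V N ∧ ε k V (w i) = 0 := by
  set w' : Fin n → TensorAlgebra k V :=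
    fun i => w i - algebraMap k _ (ε k V (w i)) with hw'
  have hw'P : ∀ i, w' i ∈ P k V N := fun i => sub_const_mem_P (w i) (hw i)
  have hsplit : ∑ i, (ε k V (w i)) • u i = - ∑ i, u i * w' i := by
    have hz : (∑ i, u i * w' i) + ∑ i, (ε k V (w i)) • u i = 0 := by
      rw [← hsum, ← Finset.sum_add_distrib]
      refine Finset.sum_congr rfl fun i _ => ?_
      simp only [hw', mul_sub, Algebra.smul_def, Algebra.commutes]
      abel
    exact eq_neg_of_add_eq_zero_right hz
  have hmem : (∑ i, (ε k V (w i)) • u i) ∈ U ⊓ (U * (G k V * ⊤)) := by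
    constructor
    · exact sum_mem fun i _ => smul_mem _ _ (hu i)
    · rw [hsplit]
      exact neg_mem (sum_mem fun i _ =>
        Submodule.mul_mem_mul (hu i) (top_mul_G_le k V (P_le_top_mul (hw'P i))))
  rw [hU] at hmem
  have hc : ∀ i, ε k V (w i) = 0 :=
    Fintype.linearIndependent_iff.mp hind _ ((Submodule.mem_bot _).mp hmem)
  intro i
  have : w i = w' i := by simp only [hw', hc i, map_zero, sub_zero]
  exact ⟨this ▸ hw'P i, hc i⟩

lemma key (hU : U ⊓ (U * (G k V * ⊤)) = ⊥) (N : ℕ) :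
    ∀ (n : ℕ) (u w : Fin n → TensorAlgebra k V), (∀ i, u i ∈ U) → LinearIndependent k u →
      (∀ i, w i ∈ F k V N) → (∑ i, u i * w i) = 0 → ∀ i, w i = 0 := by
  induction N with
  | zero =>
    intro n u w hu hind hw hsum i
    have := (step1 hU hu hind hw hsum i).1
    rw [P_zero, Submodule.mem_bot] at this
    exact this
  | succ N IH =>
    intro n u w hu hind hw hsum i
    have hP : ∀ i, w i ∈ P k V (N + 1) := fun i => (step1 hU hu hind hw hsum i).1
    have hε : ∀ i, ε k V (w i) = 0 := fun i => (step1 hU hu hind hw hsum i).2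
    have hD0 : ∀ f : V →ₗ[k] k, ∀ i, D k V f (w i) = 0 := by
      intro f
      refine IH n u (fun i => D k V f (w i)) hu hind
        (fun i => P_le_comap_D f (hP i)) ?_
      have h0 := congrArg (D k V f) hsum
      rw [map_sum, map_zero] at h0
      rw [← h0]
      refine Finset.sum_congr rfl fun i _ => ?_
      rw [D_mul, hε i, map_zero, mul_zero, add_zero]
    classical
    obtain ⟨g, hg⟩ := top_mul_G_le_range_Ψ (Module.Basis.ofVectorSpace k V)
      (P_le_top_mul (hP i))
    have hg0 : g = 0 := by
      ext j
      have hj := D_Ψ (Module.Basis.ofVectorSpace k V) g j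
      rw [hg, hD0 _ i] at hj
      simpa using hj.symm
    rw [← hg, hg0, map_zero]

end key

/-- Every element of `U * W` is a finite sum of products. -/
lemma exists_rep (U W : Submodule k (TensorAlgebra k V)) {x : TensorAlgebra k V}
    (hx : x ∈ U * W) :
    ∃ (n : ℕ) (u a : Fin n → TensorAlgebra k V),
      (∀ i, u i ∈ U) ∧ (∀ i, a i ∈ W) ∧ x = ∑ i, u i * a i := by
  refine Submodule.mul_induction_on hx ?_ ?_
  · intro m hm n hn
    exact ⟨1, fun _ => m, fun _ => n, fun _ => hm, fun _ => hn, by simp⟩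
  · rintro x y ⟨n, u, a, hu, ha, rfl⟩ ⟨n', u', a', hu', ha', rfl⟩
    refine ⟨n + n', Fin.append u u', Fin.append a a', ?_, ?_, ?_⟩
    · refine Fin.addCases ?_ ?_ <;> intro i
      · rw [Fin.append_left]; exact hu i
      · rw [Fin.append_right]; exact hu' i
    · refine Fin.addCases ?_ ?_ <;> intro i
      · rw [Fin.append_left]; exact ha i
      · rw [Fin.append_right]; exact ha' i
    · rw [Fin.sum_univ_add]
      simp only [Fin.append_left, Fin.append_right]

lemma three_imp_one (U : Submodule k (TensorAlgebra k V))
    (h3 : ∀ (n : ℕ) (u w : Fin n → TensorAlgebra k V),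
      (∀ i, u i ∈ U) → LinearIndependent k u → (∑ i, u i * w i) = 0 → ∀ i, w i = 0)
    (W₁ W₂ : Submodule k (TensorAlgebra k V)) :
    (U * W₁) ⊓ (U * W₂) = U * (W₁ ⊓ W₂) := by
  refine le_antisymm ?_ (le_inf (mul_le_mul' le_rfl inf_le_left)
    (mul_le_mul' le_rfl inf_le_right))
  rintro x ⟨hx1, hx2⟩
  obtain ⟨n, u, a, hu, ha, hxa⟩ := exists_rep U W₁ hx1
  obtain ⟨n', u', b, hu', hb, hxb⟩ := exists_rep U W₂ hx2
  set c : Fin (n + n') → TensorAlgebra k V := Fin.append u u' with hcdef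
  have hcU : ∀ i, c i ∈ U := by
    refine Fin.addCases ?_ ?_ <;> intro i
    · rw [hcdef, Fin.append_left]; exact hu i
    · rw [hcdef, Fin.append_right]; exact hu' i
  set S := Submodule.span k (Set.range c) with hSdef
  have hSU : S ≤ U := Submodule.span_le.mpr (Set.range_subset_iff.mpr hcU)
  have : FiniteDimensional k S := FiniteDimensional.span_of_finite k (Set.finite_range c)
  set d := Module.finrank k S with hd
  set e : Module.Basis (Fin d) k S := Module.finBasis k S with he
  have hei : LinearIndependent k (fun r => (e r : TensorAlgebra k V)) :=
    e.linearIndependent.map' S.subtype (Submodule.ker_subtype S)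
  have heU : ∀ r, (e r : TensorAlgebra k V) ∈ U := fun r => hSU (e r).2
  set ρ : Fin (n + n') → Fin d → k :=
    fun i r => e.repr ⟨c i, Submodule.subset_span ⟨i, rfl⟩⟩ r with hρ
  have hc : ∀ i, c i = ∑ r, ρ i r • (e r : TensorAlgebra k V) := by
    intro i
    have h1 := e.sum_repr ⟨c i, Submodule.subset_span ⟨i, rfl⟩⟩
    have h2 := congrArg (S.subtype) h1
    rw [map_sum] at h2
    simp only [Submodule.coe_subtype, map_smul] at h2
    exact h2.symm
  set A : Fin d → TensorAlgebra k V :=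
    fun r => ∑ i : Fin n, ρ (Fin.castAdd n' i) r • a i with hA
  set B : Fin d → TensorAlgebra k V :=
    fun r => ∑ i : Fin n', ρ (Fin.natAdd n i) r • b i with hB
  have hAW : ∀ r, A r ∈ W₁ := fun r => sum_mem fun i _ => smul_mem _ _ (ha i)
  have hBW : ∀ r, B r ∈ W₂ := fun r => sum_mem fun i _ => smul_mem _ _ (hb i)
  have key : ∀ (m : ℕ) (v : Fin m → TensorAlgebra k V) (w : Fin m → TensorAlgebra k V)
      (l : Fin m → Fin (n + n')), (∀ i, v i = c (l i)) →
      (∑ i, v i * w i) = ∑ r, (e r : TensorAlgebra k V) * ∑ i, ρ (l i) r • w i := by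
    intro m v w l hv
    calc ∑ i, v i * w i
        = ∑ i, ∑ r, ρ (l i) r • ((e r : TensorAlgebra k V) * w i) := by
          refine Finset.sum_congr rfl fun i _ => ?_
          rw [hv i, hc (l i), Finset.sum_mul]
          exact Finset.sum_congr rfl fun r _ => smul_mul_assoc _ _ _
      _ = ∑ r, ∑ i, ρ (l i) r • ((e r : TensorAlgebra k V) * w i) := Finset.sum_comm
      _ = ∑ r, (e r : TensorAlgebra k V) * ∑ i, ρ (l i) r • w i := by
          refine Finset.sum_congr rfl fun r _ => ?_
          rw [Finset.mul_sum]
          exact Finset.sum_congr rfl fun i _ => (mul_smul_comm _ _ _).symm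
  have hxA : x = ∑ r, (e r : TensorAlgebra k V) * A r := by
    rw [hxa, key n u a (Fin.castAdd n') (fun i => by rw [hcdef, Fin.append_left])]
  have hxB : x = ∑ r, (e r : TensorAlgebra k V) * B r := by
    rw [hxb, key n' u' b (Fin.natAdd n) (fun i => by rw [hcdef, Fin.append_right])]
  have hAB : ∀ r, A r = B r := by
    have h0 : ∑ r, (e r : TensorAlgebra k V) * (A r - B r) = 0 := by
      have : ∑ r, (e r : TensorAlgebra k V) * (A r - B r)
          = (∑ r, (e r : TensorAlgebra k V) * A r) - ∑ r, (e r : TensorAlgebra k V) * B r := by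
        rw [← Finset.sum_sub_distrib]
        exact Finset.sum_congr rfl fun r _ => mul_sub _ _ _
      rw [this, ← hxA, ← hxB, sub_self]
    intro r
    exact sub_eq_zero.mp (h3 d (fun r => (e r : TensorAlgebra k V)) (fun r => A r - B r)
      heU hei h0 r)
  rw [hxA]
  exact sum_mem fun r _ => Submodule.mul_mem_mul (heU r) ⟨hAW r, hAB r ▸ hBW r⟩

lemma ε_mul_top {x : TensorAlgebra k V} (hx : x ∈ G k V * ⊤) : ε k V x = 0 := by
  refine Submodule.mul_induction_on hx ?_ ?_
  · rintro _ ⟨v, rfl⟩ t -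
    rw [map_mul, ε_ι, zero_mul]
  · intro x y hx hy
    rw [map_add, hx, hy, add_zero]

end TIFAux

open TIFAux in
/-- A characterization of left tensor-intersection faithful subspaces of a tensor algebra.
`T(V)_{>0}` is formalized as `V · T(V)`, i.e. the product of the degree-one subspace with the
whole tensor algebra, and products of subspaces are taken inside `T(V)` via `Submodule.mul`. -/
theorem left_tensor_intersection_faithful_tfae
    {k V : Type*} [Field k] [AddCommGroup V] [Module k V]
    (U : Submodule k (TensorAlgebra k V)) :
    List.TFAE
      [ -- (i) `U` is left tensor-intersection faithful
        (∀ W₁ W₂ : Submodule k (TensorAlgebra k V),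
          (U * W₁) ⊓ (U * W₂) = U * (W₁ ⊓ W₂)),
        -- (ii) `U ∩ (U ⊗ T(V)_{>0}) = 0`
        U ⊓ (U * (LinearMap.range (TensorAlgebra.ι k (M := V)) * ⊤)) = ⊥,
        -- (iii) linearly independent families of `U` are "free" over `T(V)` on the right
        (∀ (n : ℕ) (u w : Fin n → TensorAlgebra k V),
          (∀ i, u i ∈ U) → LinearIndependent k u →
          (∑ i, u i * w i) = 0 → ∀ i, w i = 0) ] := by
  tfae_have 1 → 2 := by
    intro h1
    show U ⊓ (U * (G k V * ⊤)) = ⊥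
    have h0 : (1 : Submodule k (TensorAlgebra k V)) ⊓ (G k V * ⊤) = ⊥ := by
      rw [eq_bot_iff]
      rintro x ⟨h1x, h2x⟩
      obtain ⟨c, rfl⟩ := (Submodule.mem_one).mp h1x
      have hc : c = 0 := by
        have := ε_mul_top h2x
        rwa [ε_algebraMap] at this
      rw [hc, map_zero]
      exact Submodule.zero_mem ⊥
    calc U ⊓ (U * (G k V * ⊤)) = (U * 1) ⊓ (U * (G k V * ⊤)) := by rw [mul_one]
      _ = U * (1 ⊓ (G k V * ⊤)) := h1 1 (G k V * ⊤)
      _ = ⊥ := by rw [h0, Submodule.mul_bot]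
  tfae_have 2 → 3 := by
    intro h2 n u w hu hind hsum i
    have h2' : U ⊓ (U * (G k V * ⊤)) = ⊥ := h2
    have hFN : ∀ j : Fin n, ∃ N : ℕ, w j ∈ F k V N := by
      intro j
      have : w j ∈ ⨆ N : ℕ, F k V N := by rw [iSup_F_eq_top]; trivial
      exact (Submodule.mem_iSup_of_directed _ F_mono.directed_le).mp this
    choose Nf hNf using hFN
    exact key h2' (Finset.univ.sup Nf) n u w hu hind
      (fun j => F_mono (Finset.le_sup (Finset.mem_univ j)) (hNf j)) hsum i
  tfae_have 3 → 1 := fun h3 W₁ W₂ => three_imp_one U h3 W₁ W₂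
  tfae_finish
end

section
/- Let V be a vector space. Then V, viewed as the degree-one subspace of the tensor algebra T(V), is left tensor-intersection faithful: for all subspaces W₁, W₂ ⊆ T(V), (V⊗W₁) ∩ (V⊗W₂) = V ⊗ (W₁∩W₂) inside T(V). -/
open Submodule

section MonoidAlg

variable {k : Type*} [Field k] {κ : Type*}

local notation "T" => MonoidAlgebra k (FreeMonoid κ)

/-- The submodule of finitely supported functions valued in `W`. -/
def Sfun (W : Submodule k T) : Submodule k (κ →₀ T) where
  carrier := {f | ∀ l, f l ∈ W}
  add_mem' hf hg l := by simpa using W.add_mem (hf l) (hg l)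
  zero_mem' l := by simp
  smul_mem' c f hf l := by simpa using W.smul_mem c (hf l)

lemma mem_Sfun {W : Submodule k T} {f : κ →₀ T} : f ∈ Sfun W ↔ ∀ l, f l ∈ W := Iff.rfl

lemma Sfun_inf (W₁ W₂ : Submodule k T) : Sfun W₁ ⊓ Sfun W₂ = Sfun (W₁ ⊓ W₂) := by
  ext f
  simp [mem_Sfun, forall_and, Submodule.mem_inf]

/-- Sum of left multiplications by the generators. -/
noncomputable def Phi : (κ →₀ T) →ₗ[k] T :=
  Finsupp.lsum k fun l => LinearMap.mulLeft k (MonoidAlgebra.of k (FreeMonoid κ) (FreeMonoid.of l))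

/-- A retraction of `Phi`. -/
noncomputable def Rho : T →ₗ[k] (κ →₀ T) :=
  (Finsupp.lsum k fun (w : FreeMonoid κ) =>
    match FreeMonoid.toList w with
    | [] => 0
    | l :: w' => LinearMap.toSpanSingleton k _
        (Finsupp.single l (MonoidAlgebra.single (FreeMonoid.ofList w') (1 : k)))) ∘ₗ
    (MonoidAlgebra.coeffLinearEquiv k).toLinearMap

lemma Rho_Phi (f : κ →₀ T) : Rho (Phi f) = f := by
  induction f using Finsupp.induction_linear with
  | zero => simp
  | add f g hf hg => simp [hf, hg]
  | single l t =>
    rw [Phi, Finsupp.lsum_single]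
    induction t using MonoidAlgebra.induction_linear with
    | zero => simp
    | add t s ht hs =>
        rw [map_add, map_add, ht, hs, ← Finsupp.single_add]
    | single w c =>
        show Rho (MonoidAlgebra.of k (FreeMonoid κ) (FreeMonoid.of l) *
          MonoidAlgebra.single w c) = _
        rw [MonoidAlgebra.of_apply, MonoidAlgebra.single_mul_single, one_mul]
        rw [Rho, LinearMap.comp_apply, LinearEquiv.coe_coe, MonoidAlgebra.coeffLinearEquiv_apply,
          MonoidAlgebra.coeff_single]
        erw [Finsupp.lsum_single]
        show c • Finsupp.single l (MonoidAlgebra.single (FreeMonoid.ofList (FreeMonoid.toList w)) 1) = _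
        rw [FreeMonoid.ofList_toList, Finsupp.smul_single]
        congr 1
        show c • MonoidAlgebra.single w (1 : k) = _
        rw [MonoidAlgebra.smul_single, smul_eq_mul, mul_one]

lemma Phi_injective : Function.Injective (Phi (k := k) (κ := κ)) :=
  Function.LeftInverse.injective Rho_Phi

/-- The span of the generators -/
noncomputable def Bsub : Submodule k T :=
  span k (Set.range fun l : κ => MonoidAlgebra.of k (FreeMonoid κ) (FreeMonoid.of l))

lemma Bsub_mul (W : Submodule k T) : Bsub * W = Submodule.map Phi (Sfun W) := by
  apply le_antisymm
  · rw [Submodule.mul_le]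
    intro m hm n hn
    induction hm using Submodule.span_induction with
    | mem x hx =>
        obtain ⟨l, rfl⟩ := hx
        exact ⟨Finsupp.single l n, fun l' => by
          rcases eq_or_ne l' l with rfl | h
          · simpa using hn
          · simp [Finsupp.single_eq_of_ne' h.symm, W.zero_mem],
          by rw [Phi, Finsupp.lsum_single]; rfl⟩
    | zero => simp
    | add x y _ _ hx hy => simpa [add_mul] using Submodule.add_mem _ hx hy
    | smul c x _ hx => simpa [smul_mul_assoc] using Submodule.smul_mem _ c hx
  · rintro _ ⟨f, hf, rfl⟩
    rw [Phi, Finsupp.lsum_apply]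
    refine Submodule.sum_mem _ fun l _ => ?_
    exact Submodule.mul_mem_mul (Submodule.subset_span ⟨l, rfl⟩) (hf l)

lemma monoid_case (W₁ W₂ : Submodule k T) :
    (Bsub * W₁) ⊓ (Bsub * W₂) = Bsub * (W₁ ⊓ W₂) := by
  rw [Bsub_mul, Bsub_mul, Bsub_mul, ← Submodule.map_inf _ Phi_injective, Sfun_inf]

end MonoidAlg

/-- `V`, viewed as the degree-one subspace of the tensor algebra `T(V)`, is left
tensor-intersection faithful: products of subspaces are taken inside `T(V)`. -/
theorem degree_one_subspace_left_tensor_intersection_faithful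
    {k V : Type*} [Field k] [AddCommGroup V] [Module k V]
    (W₁ W₂ : Submodule k (TensorAlgebra k V)) :
    (LinearMap.range (TensorAlgebra.ι k (M := V)) * W₁) ⊓
      (LinearMap.range (TensorAlgebra.ι k (M := V)) * W₂) =
      LinearMap.range (TensorAlgebra.ι k (M := V)) * (W₁ ⊓ W₂) := by
  classical
  let κ := Module.Basis.ofVectorSpaceIndex k V
  let b : Module.Basis κ k V := Module.Basis.ofVectorSpace k V
  let E : TensorAlgebra k V ≃ₐ[k] MonoidAlgebra k (FreeMonoid κ) :=
    (TensorAlgebra.equivFreeAlgebra b).trans (FreeAlgebra.equivMonoidAlgebraFreeMonoid)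
  apply Submodule.map_injective_of_injective (f := E.toLinearMap) E.injective
  have hmap_inf : ∀ (p q : Submodule k (TensorAlgebra k V)),
      Submodule.map E.toLinearMap (p ⊓ q) =
        Submodule.map E.toLinearMap p ⊓ Submodule.map E.toLinearMap q :=
    fun p q => Submodule.map_inf _ E.injective
  have hmap_mul : ∀ (p q : Submodule k (TensorAlgebra k V)),
      Submodule.map E.toLinearMap (p * q) =
        Submodule.map E.toLinearMap p * Submodule.map E.toLinearMap q :=
    fun p q => Submodule.map_mul p q E.toAlgHom
  have hrange : Submodule.map E.toLinearMap
      (LinearMap.range (TensorAlgebra.ι k (M := V))) = Bsub := by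
    have h1 : LinearMap.range (TensorAlgebra.ι k (M := V)) =
        span k (Set.range fun l : κ => TensorAlgebra.ι k (b l)) := by
      rw [LinearMap.range_eq_map, ← b.span_eq, Submodule.map_span,
        ← Set.range_comp]
      rfl
    rw [h1, Submodule.map_span, ← Set.range_comp, Bsub]
    congr 1
    ext x
    constructor
    · rintro ⟨l, rfl⟩
      exact ⟨l, by simp [E, TensorAlgebra.equivFreeAlgebra_ι_apply,
        FreeAlgebra.equivMonoidAlgebraFreeMonoid, FreeAlgebra.lift_ι_apply]⟩
    · rintro ⟨l, rfl⟩
      exact ⟨l, by simp [E, TensorAlgebra.equivFreeAlgebra_ι_apply,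
        FreeAlgebra.equivMonoidAlgebraFreeMonoid, FreeAlgebra.lift_ι_apply]⟩
  rw [hmap_inf, hmap_mul, hmap_mul, hmap_mul, hmap_inf, hrange, monoid_case]
end

section
/- If U₁, U₂ ⊆ T(V) are both left tensor-intersection faithful, then U₁ ⊗ U₂ (the product subspace inside T(V)) is also left tensor-intersection faithful, i.e., (U₁⊗U₂) ∩ ((U₁⊗U₂) ⊗ T(V)_{>0}) = 0. -/
open Finsupp
namespace TIFaux
variable {k : Type*} [Field k] {B : Type*}
local notation "A" => MonoidAlgebra k (FreeMonoid B)

lemma concat_inj (b : B) : Function.Injective (fun w : FreeMonoid B => w * FreeMonoid.of b) := by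
  intro w₁ w₂ h
  have h' : FreeMonoid.toList w₁ ++ [b] = FreeMonoid.toList w₂ ++ [b] := congrArg FreeMonoid.toList h
  simpa using List.append_left_injective [b] h'

lemma concat_ne_one (b : B) (w : FreeMonoid B) : w * FreeMonoid.of b ≠ 1 := by
  intro h
  have := congrArg FreeMonoid.toList h
  simp [FreeMonoid.toList_mul] at this

lemma concat_eq_concat {b b' : B} {w w' : FreeMonoid B}
    (h : w * FreeMonoid.of b = w' * FreeMonoid.of b') : w = w' ∧ b = b' := by
  have h' : FreeMonoid.toList w ++ [b] = FreeMonoid.toList w' ++ [b'] := congrArg FreeMonoid.toList h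
  obtain ⟨h1, h2⟩ := List.append_inj' h' rfl
  exact ⟨by simpa using congrArg FreeMonoid.ofList h1, by simpa using h2⟩

lemma one_or_concat (w : FreeMonoid B) : w = 1 ∨ ∃ w' b, w = w' * FreeMonoid.of b := by
  rcases List.eq_nil_or_concat' (FreeMonoid.toList w) with h | ⟨L, b, h⟩
  · left
    simpa using congrArg FreeMonoid.ofList h
  · right
    refine ⟨FreeMonoid.ofList L, b, ?_⟩
    have := congrArg FreeMonoid.ofList h
    simpa [FreeMonoid.ofList_append] using this

lemma cons_decomp {w : FreeMonoid B} (h : w ≠ 1) :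
    ∃ b w', w = FreeMonoid.of b * w' := by
  rcases hl : FreeMonoid.toList w with _ | ⟨hd, tl⟩
  · exact absurd (by simpa using congrArg FreeMonoid.ofList hl) h
  · exact ⟨hd, FreeMonoid.ofList tl, by simpa [← FreeMonoid.ofList_append] using
      (congrArg FreeMonoid.ofList hl)⟩

/-- strip the last letter `b` from each word -/
noncomputable def rho (b : B) : A →ₗ[k] A :=
  (MonoidAlgebra.coeffLinearEquiv k).symm.toLinearMap ∘ₗ
  Finsupp.lcomapDomain (fun w : FreeMonoid B => w * FreeMonoid.of b) (concat_inj b) ∘ₗ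
  (MonoidAlgebra.coeffLinearEquiv k).toLinearMap

lemma rho_apply (b : B) (t : A) (w : FreeMonoid B) :
    (rho (k := k) b t).coeff w = t.coeff (w * FreeMonoid.of b) := rfl

lemma rho_single_concat (b : B) (m : FreeMonoid B) (c : k) :
    rho (k := k) b (MonoidAlgebra.single (m * FreeMonoid.of b) c) = MonoidAlgebra.single m c := by
  ext w
  rw [rho_apply]
  by_cases h : m = w
  · subst h; simp
  · rw [MonoidAlgebra.coeff_single, MonoidAlgebra.coeff_single, Finsupp.single_eq_of_ne' h,
      Finsupp.single_eq_of_ne']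
    intro hc
    exact h (concat_eq_concat hc).1

lemma rho_single_of_ne (b : B) {v : FreeMonoid B} (hv : ∀ m, v ≠ m * FreeMonoid.of b) (c : k) :
    rho (k := k) b (MonoidAlgebra.single v c) = 0 := by
  ext w
  rw [rho_apply]
  rw [MonoidAlgebra.coeff_zero, Finsupp.coe_zero, Pi.zero_apply, MonoidAlgebra.coeff_single,
    Finsupp.single_eq_of_ne']
  intro hc
  exact hv w hc

lemma rho_mul (b : B) (x y : A) :
    rho (k := k) b (x * y) = x * rho b y + y.coeff 1 • rho b x := by
  induction y using MonoidAlgebra.induction_linear with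
  | zero => simp
  | add f g hf hg =>
      rw [mul_add, map_add, hf, hg, map_add, mul_add, MonoidAlgebra.coeff_add, Finsupp.add_apply,
        add_smul]
      abel
  | single v d =>
      rcases one_or_concat v with rfl | ⟨v', b', rfl⟩
      · have h0 : rho (k := k) b (MonoidAlgebra.single (1 : FreeMonoid B) d) = 0 :=
          rho_single_of_ne b (fun m h => concat_ne_one b m h.symm) d
        have h1 : (MonoidAlgebra.single (1 : FreeMonoid B) d : A) = d • (1 : A) := by
          rw [MonoidAlgebra.one_def, MonoidAlgebra.smul_single, smul_eq_mul, mul_one]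
        rw [h0, mul_zero, zero_add, MonoidAlgebra.coeff_single, Finsupp.single_eq_same, h1, mul_smul_comm, mul_one, map_smul]
      · have hv1 : (MonoidAlgebra.single (v' * FreeMonoid.of b') d : A).coeff 1 = 0 :=
          Finsupp.single_eq_of_ne' (concat_ne_one b' v')
        rw [hv1, zero_smul, add_zero]
        by_cases hb : b' = b
        · subst hb
          rw [rho_single_concat]
          induction x using MonoidAlgebra.induction_linear with
          | zero => simp
          | add f g hf hg => rw [add_mul, map_add, hf, hg, add_mul]
          | single u c =>
              rw [MonoidAlgebra.single_mul_single, ← mul_assoc, rho_single_concat,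
                MonoidAlgebra.single_mul_single]
        · rw [rho_single_of_ne b (fun m h => hb (concat_eq_concat h).2), mul_zero]
          induction x using MonoidAlgebra.induction_linear with
          | zero => simp
          | add f g hf hg => rw [add_mul, map_add, hf, hg, add_zero]
          | single u c =>
              rw [MonoidAlgebra.single_mul_single]
              refine rho_single_of_ne b (fun m h => ?_) _
              rw [← mul_assoc] at h
              exact hb (concat_eq_concat h).2


section
variable (k B)

/-- the augmentation-type subspace of elements with zero constant coefficient -/
noncomputable def P : Submodule k (MonoidAlgebra k (FreeMonoid B)) :=
  LinearMap.ker ((Finsupp.lapply (1 : FreeMonoid B)) ∘ₗ (MonoidAlgebra.coeffLinearEquiv k).toLinearMap)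

/-- the degree-one subspace -/
noncomputable def W : Submodule k (MonoidAlgebra k (FreeMonoid B)) :=
  Submodule.span k (Set.range fun i : B => (MonoidAlgebra.single (FreeMonoid.of i) 1 : MonoidAlgebra k (FreeMonoid B)))

end

lemma mem_P {t : A} : t ∈ P k B ↔ t.coeff 1 = 0 := by
  exact Iff.rfl

lemma of_mul_ne_one (i : B) (w : FreeMonoid B) : FreeMonoid.of i * w ≠ 1 := by
  intro h
  have := congrArg FreeMonoid.toList h
  simp [FreeMonoid.toList_mul] at this

lemma single_of_mul_apply_one (i : B) (y : A) :
    ((MonoidAlgebra.single (FreeMonoid.of i) (1:k)) * y).coeff 1 = 0 := by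
  exact MonoidAlgebra.single_mul_apply_of_not_exists_mul _ _
    (fun ⟨d, hd⟩ => of_mul_ne_one i d hd.symm)

lemma W_mul_top : W k B * ⊤ = P k B := by
  apply le_antisymm
  · rw [Submodule.mul_le]
    intro w hw y _
    rw [mem_P]
    let φ : MonoidAlgebra k (FreeMonoid B) →ₗ[k] k :=
      (Finsupp.lapply 1).comp ((MonoidAlgebra.coeffLinearEquiv k).toLinearMap.comp
        (LinearMap.mulRight k y))
    have hle : W k B ≤ LinearMap.ker φ := by
      rw [W, Submodule.span_le]
      rintro _ ⟨i, rfl⟩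
      exact single_of_mul_apply_one i y
    exact hle hw
  · intro t ht
    have ht1 : t.coeff 1 = 0 := mem_P.mp ht
    have hrep : t = t.coeff.sum fun w c => MonoidAlgebra.single w c :=
      (MonoidAlgebra.sum_coeff_single t).symm
    rw [hrep, Finsupp.sum]
    apply Submodule.sum_mem
    intro w hw
    have hw1 : w ≠ 1 := by rintro rfl; exact (Finsupp.mem_support_iff.mp hw) ht1
    obtain ⟨b, w', rfl⟩ := cons_decomp hw1
    have h2 : (MonoidAlgebra.single (FreeMonoid.of b * w') (t.coeff (FreeMonoid.of b * w'))
          : MonoidAlgebra k (FreeMonoid B)) =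
        MonoidAlgebra.single (FreeMonoid.of b) (1:k) *
          MonoidAlgebra.single w' (t.coeff (FreeMonoid.of b * w')) := by
      rw [MonoidAlgebra.single_mul_single, one_mul]
    rw [h2]
    exact Submodule.mul_mem_mul (Submodule.subset_span ⟨b, rfl⟩) Submodule.mem_top


section Key

variable {U : Submodule k (MonoidAlgebra k (FreeMonoid B))}
  {iT : Type*} {e : iT → MonoidAlgebra k (FreeMonoid B)}

lemma lam_step (hU : U ⊓ U * P k B = ⊥) (he : ∀ i, e i ∈ U)
    (hind : LinearIndependent k e) (s : Finset iT) (t : iT → MonoidAlgebra k (FreeMonoid B))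
    (hsum : ∑ l ∈ s, e l * t l = 0) : ∀ l ∈ s, (t l).coeff 1 = 0 := by
  have hker : ∀ l, (t l - ((t l).coeff 1) • 1) ∈ P k B := by
    intro l
    rw [mem_P, MonoidAlgebra.coeff_sub, Finsupp.sub_apply, MonoidAlgebra.coeff_smul,
      Finsupp.smul_apply, MonoidAlgebra.one_def, MonoidAlgebra.coeff_single,
      Finsupp.single_eq_same, smul_eq_mul, mul_one, sub_self]
  have hterm : ∀ l, e l * (t l - ((t l).coeff 1) • 1) = e l * t l - ((t l).coeff 1) • e l := by
    intro l
    rw [mul_sub, mul_smul_comm, mul_one]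
  have h2 : ∑ l ∈ s, ((t l).coeff 1) • e l = - ∑ l ∈ s, e l * (t l - ((t l).coeff 1) • 1) := by
    rw [Finset.sum_congr rfl fun l _ => hterm l, Finset.sum_sub_distrib, hsum, zero_sub, neg_neg]
  have hmem : ∑ l ∈ s, ((t l).coeff 1) • e l ∈ U ⊓ U * P k B := by
    constructor
    · exact Submodule.sum_mem _ fun l _ => Submodule.smul_mem _ _ (he l)
    · rw [h2]
      exact Submodule.neg_mem _ <| Submodule.sum_mem _ fun l _ =>
        Submodule.mul_mem_mul (he l) (hker l)
  rw [hU, Submodule.mem_bot] at hmem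
  exact linearIndependent_iff'.mp hind s _ hmem

lemma key (hU : U ⊓ U * P k B = ⊥) (he : ∀ i, e i ∈ U) (hind : LinearIndependent k e)
    (D : ℕ) : ∀ (s : Finset iT) (t : iT → MonoidAlgebra k (FreeMonoid B)),
    (∀ l ∈ s, ∀ w ∈ (t l).coeff.support, (FreeMonoid.toList w).length ≤ D) →
    ∑ l ∈ s, e l * t l = 0 → ∀ l ∈ s, t l = 0 := by
  induction D with
  | zero =>
      intro s t hbound hsum l hl
      have hlam := lam_step hU he hind s t hsum l hl
      ext w
      rw [MonoidAlgebra.coeff_zero, Finsupp.coe_zero, Pi.zero_apply]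
      by_cases hw : w = 1
      · rw [hw]; exact hlam
      · rw [← Finsupp.notMem_support_iff]
        intro hsup
        have hlen := hbound l hl w hsup
        rw [Nat.le_zero, List.length_eq_zero_iff] at hlen
        exact hw (by simpa using congrArg FreeMonoid.ofList hlen)
  | succ D ih =>
      intro s t hbound hsum l hl
      have hlam := lam_step hU he hind s t hsum
      have hrel : ∀ b : B, ∑ l ∈ s, e l * rho b (t l) = 0 := by
        intro b
        calc ∑ l ∈ s, e l * rho b (t l)
            = ∑ l ∈ s, rho (k := k) b (e l * t l) := Finset.sum_congr rfl fun l hl => by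
              rw [rho_mul, hlam l hl, zero_smul, add_zero]
          _ = rho (k := k) b (∑ l ∈ s, e l * t l) := (map_sum _ _ _).symm
          _ = 0 := by rw [hsum, map_zero]
      have hbound' : ∀ b : B, ∀ l ∈ s, ∀ w ∈ (rho (k := k) b (t l)).coeff.support,
          (FreeMonoid.toList w).length ≤ D := by
        intro b l hl w hw
        have hw' : w * FreeMonoid.of b ∈ (t l).coeff.support := by
          rw [Finsupp.mem_support_iff] at hw ⊢
          rwa [rho_apply] at hw
        have := hbound l hl _ hw'
        rw [FreeMonoid.toList_mul] at this
        simp only [List.length_append, FreeMonoid.toList_of, List.length_singleton] at this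
        omega
      have hrho : ∀ b : B, rho (k := k) b (t l) = 0 := fun b =>
        ih s (fun l => rho b (t l)) (hbound' b) (hrel b) l hl
      ext w
      rw [MonoidAlgebra.coeff_zero, Finsupp.coe_zero, Pi.zero_apply]
      rcases one_or_concat w with rfl | ⟨w', b, rfl⟩
      · exact hlam l hl
      · rw [← rho_apply (k := k) b (t l) w', hrho b, MonoidAlgebra.coeff_zero, Finsupp.coe_zero,
          Pi.zero_apply]

end Key


lemma repr_mul {U N : Submodule k (MonoidAlgebra k (FreeMonoid B))} {iT : Type*}
    (b₁ : Module.Basis iT k U) {x : MonoidAlgebra k (FreeMonoid B)} (hx : x ∈ U * N) :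
    ∃ c : iT →₀ MonoidAlgebra k (FreeMonoid B), (∀ l, c l ∈ N) ∧
      x = c.sum fun l a => ((b₁ l : U) : MonoidAlgebra k (FreeMonoid B)) * a := by
  refine Submodule.mul_induction_on hx ?_ ?_
  · intro m hm n hn
    refine ⟨(b₁.repr ⟨m, hm⟩).mapRange (· • n) (zero_smul k n), fun l => ?_, ?_⟩
    · rw [Finsupp.mapRange_apply]
      exact Submodule.smul_mem _ _ hn
    · have hm' : m = (b₁.repr ⟨m, hm⟩).sum
          fun l cl => cl • ((b₁ l : U) : MonoidAlgebra k (FreeMonoid B)) := by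
        have h := b₁.linearCombination_repr (⟨m, hm⟩ : U)
        rw [Finsupp.linearCombination_apply] at h
        have h2 := congrArg (U.subtype) h
        rw [map_finsuppSum] at h2
        simpa using h2.symm
      rw [Finsupp.sum_mapRange_index fun l => by rw [mul_zero]]
      have hstep : ((b₁.repr ⟨m, hm⟩).sum
            fun l cl => ((b₁ l : U) : MonoidAlgebra k (FreeMonoid B)) * (cl • n)) =
          ((b₁.repr ⟨m, hm⟩).sum
            fun l cl => cl • ((b₁ l : U) : MonoidAlgebra k (FreeMonoid B))) * n := by
        rw [Finsupp.sum_mul]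
        exact Finset.sum_congr rfl fun l _ => by
          dsimp only
          rw [mul_smul_comm, smul_mul_assoc]
      rw [hstep, ← hm']
  · rintro x y ⟨c, hc, hxc⟩ ⟨d, hd, hyd⟩
    refine ⟨c + d, fun l => add_mem (hc l) (hd l), ?_⟩
    rw [Finsupp.sum_add_index' (fun l => mul_zero _) (fun l a b => mul_add _ _ _), ← hxc, ← hyd]

theorem MA_version {U₁ U₂ : Submodule k (MonoidAlgebra k (FreeMonoid B))}
    (h1 : U₁ ⊓ U₁ * P k B = ⊥) (h2 : U₂ ⊓ U₂ * P k B = ⊥) :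
    (U₁ * U₂) ⊓ (U₁ * U₂ * P k B) = ⊥ := by
  rw [eq_bot_iff]
  rintro x ⟨hxa, hxb⟩
  rw [Submodule.mem_bot]
  classical
  let b₁ := Module.Basis.ofVectorSpace k U₁
  set e : _ → MonoidAlgebra k (FreeMonoid B) :=
    fun l => ((b₁ l : U₁) : MonoidAlgebra k (FreeMonoid B)) with he_def
  have he : ∀ l, e l ∈ U₁ := fun l => (b₁ l).2
  have hind : LinearIndependent k e :=
    b₁.linearIndependent.map' U₁.subtype (Submodule.ker_subtype U₁)
  obtain ⟨c, hc, hxc⟩ := repr_mul b₁ hxa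
  rw [mul_assoc] at hxb
  obtain ⟨d, hd, hxd⟩ := repr_mul b₁ hxb
  have hrel : ((c - d).sum fun l a => e l * a) = 0 := by
    rw [Finsupp.sum_sub_index fun l a b => mul_sub _ _ _, ← hxc, ← hxd, sub_self]
  have hrel' : ∑ l ∈ (c - d).support, e l * (c - d) l = 0 := hrel
  set D := ((c - d).support).sup
    (fun l => ((c - d) l).coeff.support.sup fun w => (FreeMonoid.toList w).length) with hD
  have hbound : ∀ l ∈ (c - d).support, ∀ w ∈ ((c - d) l).coeff.support,
      (FreeMonoid.toList w).length ≤ D :=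
    fun l hl w hw => le_trans
      (Finset.le_sup (f := fun w => (FreeMonoid.toList w).length) hw)
      (Finset.le_sup
        (f := fun l => ((c - d) l).coeff.support.sup fun w => (FreeMonoid.toList w).length) hl)
  have hzero := key h1 he hind D (c - d).support (fun l => (c - d) l) hbound hrel'
  have hcd : ∀ l, c l = d l := by
    intro l
    by_cases hls : l ∈ (c - d).support
    · have h3 : c l - d l = 0 := by simpa [Finsupp.sub_apply] using hzero l hls
      exact sub_eq_zero.mp h3
    · have := Finsupp.notMem_support_iff.mp hls
      rw [Finsupp.sub_apply] at this
      exact sub_eq_zero.mp this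
  have hczero : c = 0 := by
    ext l w
    have hmem : c l ∈ U₂ ⊓ U₂ * P k B := ⟨hc l, by rw [hcd l]; exact hd l⟩
    rw [h2, Submodule.mem_bot] at hmem
    rw [hmem]
    rfl
  rw [hxc, hczero, Finsupp.sum_zero_index]


theorem transfer {k V : Type*} [Field k] [AddCommGroup V] [Module k V]
    {κ : Type*} (bV : Module.Basis κ k V)
    (U₁ U₂ : Submodule k (TensorAlgebra k V))
    (hU₁ : U₁ ⊓ (U₁ * (LinearMap.range (TensorAlgebra.ι k (M := V)) * ⊤)) = ⊥)
    (hU₂ : U₂ ⊓ (U₂ * (LinearMap.range (TensorAlgebra.ι k (M := V)) * ⊤)) = ⊥) :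
    (U₁ * U₂) ⊓ ((U₁ * U₂) * (LinearMap.range (TensorAlgebra.ι k (M := V)) * ⊤)) = ⊥ := by
  classical
  let E : TensorAlgebra k V ≃ₐ[k] MonoidAlgebra k (FreeMonoid κ) :=
    (TensorAlgebra.equivFreeAlgebra bV).trans FreeAlgebra.equivMonoidAlgebraFreeMonoid
  let L : TensorAlgebra k V →ₗ[k] MonoidAlgebra k (FreeMonoid κ) := E.toAlgHom.toLinearMap
  have hinj : Function.Injective L := fun a b h => E.injective h
  have hLmul : ∀ M N : Submodule k (TensorAlgebra k V),
      Submodule.map L (M * N) = Submodule.map L M * Submodule.map L N :=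
    fun M N => Submodule.map_mul M N E.toAlgHom
  have htop : Submodule.map L ⊤ = ⊤ := by
    rw [Submodule.map_top]
    exact LinearMap.range_eq_top.mpr (fun y => ⟨E.symm y, E.apply_symm_apply y⟩)
  have hgen : ∀ i : κ, E (TensorAlgebra.ι k (bV i)) =
      MonoidAlgebra.single (FreeMonoid.of i) (1 : k) := by
    intro i
    show FreeAlgebra.equivMonoidAlgebraFreeMonoid
      ((TensorAlgebra.equivFreeAlgebra bV) (TensorAlgebra.ι k (bV i))) = _
    rw [TensorAlgebra.equivFreeAlgebra_ι_apply]
    show (FreeAlgebra.lift k fun x => (MonoidAlgebra.of k (FreeMonoid κ)) (FreeMonoid.of x))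
      (FreeAlgebra.ι k i) = _
    rw [FreeAlgebra.lift_ι_apply, MonoidAlgebra.of_apply]
  have hι : Submodule.map L (LinearMap.range (TensorAlgebra.ι k (M := V))) = W k κ := by
    rw [LinearMap.range_eq_map, ← bV.span_eq, Submodule.map_span, Submodule.map_span, W,
      ← Set.range_comp, ← Set.range_comp]
    congr 1
    ext x
    constructor
    · rintro ⟨i, rfl⟩; exact ⟨i, (hgen i).symm⟩
    · rintro ⟨i, rfl⟩; exact ⟨i, hgen i⟩
  have hVtop : Submodule.map L (LinearMap.range (TensorAlgebra.ι k (M := V)) * ⊤) = P k κ := by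
    rw [hLmul, hι, htop, W_mul_top]
  have hh1 : Submodule.map L U₁ ⊓ Submodule.map L U₁ * P k κ = ⊥ := by
    have h := congrArg (Submodule.map L) hU₁
    rwa [Submodule.map_inf L hinj, hLmul, hVtop, Submodule.map_bot] at h
  have hh2 : Submodule.map L U₂ ⊓ Submodule.map L U₂ * P k κ = ⊥ := by
    have h := congrArg (Submodule.map L) hU₂
    rwa [Submodule.map_inf L hinj, hLmul, hVtop, Submodule.map_bot] at h
  have hconc := MA_version hh1 hh2
  apply Submodule.map_injective_of_injective hinj
  rw [Submodule.map_inf L hinj, Submodule.map_bot, hLmul, hLmul, hVtop, hLmul]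
  exact hconc

end TIFaux

/-- The product (inside `T(V)`) of two left tensor-intersection faithful subspaces is again
left tensor-intersection faithful, where the left tensor-intersection faithfulness of a
subspace `U` is expressed by the equivalent condition `U ∩ (U·T(V)_{>0}) = 0`, with
`T(V)_{>0}` formalized as `V·T(V)`. -/
theorem mul_left_tensor_intersection_faithful
    {k V : Type*} [Field k] [AddCommGroup V] [Module k V]
    (U₁ U₂ : Submodule k (TensorAlgebra k V))
    (hU₁ : U₁ ⊓ (U₁ * (LinearMap.range (TensorAlgebra.ι k (M := V)) * ⊤)) = ⊥)
    (hU₂ : U₂ ⊓ (U₂ * (LinearMap.range (TensorAlgebra.ι k (M := V)) * ⊤)) = ⊥) :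
    (U₁ * U₂) ⊓ ((U₁ * U₂) * (LinearMap.range (TensorAlgebra.ι k (M := V)) * ⊤)) = ⊥ := by
  exact TIFaux.transfer (Module.Basis.ofVectorSpace k V) U₁ U₂ hU₁ hU₂
end

section
/- Let U' ⊆ U ⊆ T(V) with U left tensor-intersection faithful, and let W' ⊆ W ⊆ T(V) be arbitrary subspaces. Then (U' ⊗ W) ∩ (U ⊗ W') = U' ⊗ W' as subspaces of T(V). -/
namespace InterProdAux

open MonoidAlgebra Finsupp

variable {k : Type*} [Field k] {B : Type*}

local notation "A" => MonoidAlgebra k (FreeMonoid B)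

noncomputable def X (b : B) : MonoidAlgebra k (FreeMonoid B) :=
  MonoidAlgebra.single (FreeMonoid.of b) 1

lemma concat_cases (w : FreeMonoid B) : w = 1 ∨ ∃ w' b, w = w' * FreeMonoid.of b := by
  rcases (FreeMonoid.toList w).eq_nil_or_concat with h | ⟨l, b, h⟩
  · left
    have := congrArg FreeMonoid.ofList h
    simpa [FreeMonoid.ofList_toList] using this
  · right
    refine ⟨FreeMonoid.ofList l, b, ?_⟩
    have := congrArg FreeMonoid.ofList h
    simpa [FreeMonoid.ofList_toList, FreeMonoid.ofList_append, FreeMonoid.ofList_singleton] using this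

lemma mul_single_apply_of_ne (g : A) (x y : FreeMonoid B) (r : k) (h : ∀ a, a * x ≠ y) :
    ((g * MonoidAlgebra.single x r : A)).coeff y = 0 := by
  classical
  exact MonoidAlgebra.coeff_mul_single_of_forall_mul_ne r g h

lemma mul_X_apply_concat (g : A) (w : FreeMonoid B) (b : B) :
    ((g * X b : A)).coeff (w * FreeMonoid.of b) = g.coeff w := by
  have := MonoidAlgebra.coeff_mul_single_eq_coeff_mul (x := g) (r := (1:k)) (m := FreeMonoid.of b)
    (m₁ := w * FreeMonoid.of b) w (fun a _ => mul_left_inj _)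
  simpa only [mul_one, X] using this

lemma mul_X_apply_concat_ne (g : A) (w : FreeMonoid B) {b c : B} (h : b ≠ c) :
    ((g * X b : A)).coeff (w * FreeMonoid.of c) = 0 := by
  refine mul_single_apply_of_ne g _ _ _ fun a hab => ?_
  have := congrArg (fun l => (FreeMonoid.toList l).getLast?) hab
  simp only [FreeMonoid.toList_mul, FreeMonoid.toList_of, List.getLast?_concat] at this
  exact h (Option.some_injective _ this)

lemma mul_X_apply_one (g : A) (b : B) : ((g * X b : A)).coeff 1 = 0 := by
  refine mul_single_apply_of_ne g _ _ _ fun a hab => ?_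
  have := congrArg (fun l => (FreeMonoid.toList l).length) hab
  simp [FreeMonoid.toList_mul] at this


/-- strip the last letter `b` -/
noncomputable def D (b : B) : MonoidAlgebra k (FreeMonoid B) →ₗ[k] MonoidAlgebra k (FreeMonoid B) :=
  (MonoidAlgebra.coeffLinearEquiv k).symm.toLinearMap ∘ₗ
    Finsupp.lcomapDomain (fun w => w * FreeMonoid.of b) (mul_left_injective _) ∘ₗ
    (MonoidAlgebra.coeffLinearEquiv k).toLinearMap

lemma D_apply (b : B) (f : A) (w : FreeMonoid B) : (D b f : A).coeff w = f.coeff (w * FreeMonoid.of b) := rfl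

noncomputable def lastLetters (f : A) : Finset B :=
  haveI := Classical.decEq B
  f.coeff.support.biUnion fun w => (FreeMonoid.toList w).getLast?.toFinset

lemma mem_lastLetters {f : A} {b : B} (h : D b f ≠ 0) : b ∈ lastLetters f := by
  classical
  obtain ⟨w, hw⟩ : ∃ w, (D b f : A).coeff w ≠ 0 := by
    by_contra hc
    push_neg at hc
    exact h (MonoidAlgebra.ext (Finsupp.ext fun w => hc w))
  rw [D_apply] at hw
  have hmem : w * FreeMonoid.of b ∈ f.coeff.support := Finsupp.mem_support_iff.2 hw
  unfold lastLetters
  rw [Finset.mem_biUnion]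
  exact ⟨_, hmem, by simp [FreeMonoid.toList_mul, FreeMonoid.toList_of, List.getLast?_concat]⟩

noncomputable def decomp (f : A) : B →₀ MonoidAlgebra k (FreeMonoid B) :=
  Finsupp.onFinset (lastLetters f) (fun b => D b f) fun _ h => mem_lastLetters h

@[simp] lemma decomp_apply (f : A) (b : B) : decomp f b = D b f := rfl

noncomputable def Psi : (B →₀ MonoidAlgebra k (FreeMonoid B)) →ₗ[k] MonoidAlgebra k (FreeMonoid B) :=
  Finsupp.lsum k fun b => LinearMap.mulRight k (X b)

lemma Psi_apply (g : B →₀ MonoidAlgebra k (FreeMonoid B)) :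
    Psi g = g.sum fun b p => p * X b := rfl




lemma Psi_apply_one (g : B →₀ MonoidAlgebra k (FreeMonoid B)) : (Psi g : A).coeff 1 = 0 := by
  classical
  rw [Psi_apply]
  rw [Finsupp.sum, MonoidAlgebra.coeff_sum, Finset.sum_apply']
  exact Finset.sum_eq_zero fun b _ => mul_X_apply_one _ _


lemma Psi_apply_concat (g : B →₀ MonoidAlgebra k (FreeMonoid B)) (w : FreeMonoid B) (b : B) :
    (Psi g : A).coeff (w * FreeMonoid.of b) = (g b : A).coeff w := by
  classical
  rw [Psi_apply, Finsupp.sum, MonoidAlgebra.coeff_sum, Finset.sum_apply']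
  rw [Finset.sum_eq_single b]
  · by_cases hb : b ∈ g.support
    · exact mul_X_apply_concat _ _ _
    · rw [Finsupp.notMem_support_iff.1 hb]
      simp [mul_X_apply_concat]
  · intro c _ hc
    exact mul_X_apply_concat_ne _ _ hc
  · intro hb
    rw [Finsupp.notMem_support_iff.1 hb]
    simp

lemma Psi_inj {g : B →₀ MonoidAlgebra k (FreeMonoid B)} (h : Psi g = 0) : g = 0 := by
  ext b w
  have := congrArg (fun f : A => f.coeff (w * FreeMonoid.of b)) h
  simpa [Psi_apply_concat] using this

lemma Psi_decomp {f : A} (hf : f.coeff 1 = 0) : Psi (decomp f) = f := by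
  ext w
  rcases concat_cases w with rfl | ⟨w', b, rfl⟩
  · rw [Psi_apply_one, hf]
  · rw [Psi_apply_concat, decomp_apply, D_apply]

noncomputable def letterSpan (k B : Type*) [Field k] : Submodule k (MonoidAlgebra k (FreeMonoid B)) :=
  Submodule.span k (Set.range fun b : B => X b)

lemma head_cases (w : FreeMonoid B) : w = 1 ∨ ∃ b w', w = FreeMonoid.of b * w' := by
  rcases h : FreeMonoid.toList w with _ | ⟨b, l⟩
  · left
    have := congrArg FreeMonoid.ofList h
    simpa [FreeMonoid.ofList_toList] using this
  · right
    refine ⟨b, FreeMonoid.ofList l, ?_⟩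
    have := congrArg FreeMonoid.ofList h
    simpa [FreeMonoid.ofList_toList, FreeMonoid.ofList_cons] using this

lemma mem_letterSpan_mul_top {f : A} (hf : f.coeff 1 = 0) : f ∈ letterSpan k B * ⊤ := by
  classical
  have : f = f.coeff.sum fun w c => MonoidAlgebra.single w c := (MonoidAlgebra.sum_coeff_single f).symm
  rw [this, Finsupp.sum]
  refine Submodule.sum_mem _ fun w hw => ?_
  rcases head_cases w with rfl | ⟨b, w', rfl⟩
  · exact absurd (Finsupp.mem_support_iff.1 hw) (by simpa using hf)
  · have : (MonoidAlgebra.single (FreeMonoid.of b * w') (f.coeff (FreeMonoid.of b * w')) : A)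
        = X b * MonoidAlgebra.single w' (f.coeff (FreeMonoid.of b * w')) := by
      rw [X, MonoidAlgebra.single_mul_single, one_mul]
    rw [this]
    exact Submodule.mul_mem_mul (Submodule.subset_span ⟨b, rfl⟩) trivial

lemma mul_single_one (g : A) (r : k) : g * MonoidAlgebra.single 1 r = r • g := by
  have h1 : (MonoidAlgebra.single (1 : FreeMonoid B) r : A) = r • 1 := by
    rw [MonoidAlgebra.one_def, MonoidAlgebra.smul_single, smul_eq_mul, mul_one]
  rw [h1, mul_smul_comm, mul_one]

variable {η : Type*}

lemma split_step (U : Submodule k (MonoidAlgebra k (FreeMonoid B)))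
    (hU : U ⊓ (U * (letterSpan k B * ⊤)) = ⊥)
    (u : η → MonoidAlgebra k (FreeMonoid B)) (hu : ∀ i, u i ∈ U)
    (hind : LinearIndependent k u)
    (t : η →₀ MonoidAlgebra k (FreeMonoid B))
    (h0 : (t.sum fun i a => u i * a) = 0) : ∀ i, (t i : A).coeff 1 = 0 := by
  classical
  set c : η →₀ k := t.mapRange (fun f => (f : A).coeff 1)
    (by show (0 : A).coeff 1 = 0; rw [MonoidAlgebra.coeff_zero, Finsupp.coe_zero, Pi.zero_apply]) with hc
  set S1 : MonoidAlgebra k (FreeMonoid B) := Finsupp.linearCombination k u c with hS1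
  set S2 : MonoidAlgebra k (FreeMonoid B) :=
    t.sum fun i f => u i * (f - MonoidAlgebra.single 1 ((f : A).coeff 1)) with hS2
  have hsum : S1 + S2 = 0 := by
    have e1 : S1 = t.sum fun i f => u i * MonoidAlgebra.single 1 ((f : A).coeff 1) := by
      rw [hS1, Finsupp.linearCombination_apply, hc, Finsupp.sum_mapRange_index (by simp)]
      exact Finsupp.sum_congr fun i _ => by rw [mul_single_one]
    rw [e1, hS2, ← Finsupp.sum_add]
    rw [← h0]
    exact Finsupp.sum_congr fun i _ => by rw [← mul_add, add_sub_cancel]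
  have hS1U : S1 ∈ U := by
    rw [hS1, Finsupp.linearCombination_apply, Finsupp.sum]
    exact Submodule.sum_mem _ fun i _ => Submodule.smul_mem _ _ (hu i)
  have hS2U : S2 ∈ U * (letterSpan k B * ⊤) := by
    rw [hS2, Finsupp.sum]
    refine Submodule.sum_mem _ fun i _ => Submodule.mul_mem_mul (hu i) ?_
    refine mem_letterSpan_mul_top ?_
    rw [MonoidAlgebra.coeff_sub, Finsupp.sub_apply, MonoidAlgebra.coeff_single, Finsupp.single_apply, if_pos rfl, sub_self]
  have hS10 : S1 = 0 := by
    have : S1 ∈ U ⊓ (U * (letterSpan k B * ⊤)) := by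
      refine ⟨hS1U, ?_⟩
      have : S1 = -S2 := eq_neg_of_add_eq_zero_left hsum
      rw [this]
      exact Submodule.neg_mem _ hS2U
    rw [hU] at this
    exact this
  have hc0 : c = 0 := linearIndependent_iff.1 hind c hS10
  intro i
  have := congrArg (fun f => f i) hc0
  simpa [hc, Finsupp.mapRange_apply] using this

lemma len_zero_eq_one {w : FreeMonoid B} (h : (FreeMonoid.toList w).length = 0) : w = 1 := by
  have := List.length_eq_zero_iff.1 h
  have := congrArg FreeMonoid.ofList this
  simpa [FreeMonoid.ofList_toList] using this

lemma Psi_mapRange (a : MonoidAlgebra k (FreeMonoid B)) (G : B →₀ MonoidAlgebra k (FreeMonoid B)) :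
    Psi (Finsupp.mapRange (fun p => a * p) (mul_zero a) G) = a * Psi G := by
  rw [Psi_apply, Psi_apply, Finsupp.sum_mapRange_index (by simp), Finsupp.mul_sum]
  exact Finsupp.sum_congr fun b _ => mul_assoc _ _ _

lemma faith_core (U : Submodule k (MonoidAlgebra k (FreeMonoid B)))
    (hU : U ⊓ (U * (letterSpan k B * ⊤)) = ⊥)
    (u : η → MonoidAlgebra k (FreeMonoid B)) (hu : ∀ i, u i ∈ U)
    (hind : LinearIndependent k u) :
    ∀ n : ℕ, ∀ t : η →₀ MonoidAlgebra k (FreeMonoid B),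
      (∀ i, ∀ w ∈ (t i : A).coeff.support, (FreeMonoid.toList w).length ≤ n) →
      (t.sum fun i a => u i * a) = 0 → t = 0 := by
  intro n
  induction n with
  | zero =>
    intro t hlen h0
    have hone := split_step U hU u hu hind t h0
    refine Finsupp.ext fun i => MonoidAlgebra.ext (Finsupp.ext fun w => ?_)
    by_contra hw
    have hmem : w ∈ (t i : A).coeff.support := Finsupp.mem_support_iff.2 hw
    have := len_zero_eq_one (Nat.le_zero.1 (hlen i w hmem))
    rw [this] at hw
    exact hw (hone i)
  | succ n ih =>
    intro t hlen h0
    have hone := split_step U hU u hu hind t h0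
    classical
    set g : B →₀ MonoidAlgebra k (FreeMonoid B) :=
      t.sum fun i f => Finsupp.mapRange (fun p => u i * p) (mul_zero _) (decomp f) with hg
    have hPsi : Psi g = 0 := by
      rw [hg, map_finsuppSum]
      rw [← h0]
      refine Finsupp.sum_congr fun i hi => ?_
      rw [Psi_mapRange, Psi_decomp (hone i)]
    have hg0 : g = 0 := Psi_inj hPsi
    have hDb : ∀ b i, D b (t i) = (0 : MonoidAlgebra k (FreeMonoid B)) := by
      intro b
      have hgb : (t.sum fun i f => u i * D b f) = 0 := by
        have := congrArg (fun G : B →₀ MonoidAlgebra k (FreeMonoid B) => G b) hg0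
        simp only [hg, Finsupp.coe_zero, Pi.zero_apply] at this
        rw [Finsupp.sum, Finset.sum_apply'] at this
        rw [Finsupp.sum]
        rw [← this]
        exact Finset.sum_congr rfl fun i _ => by rw [Finsupp.mapRange_apply, decomp_apply]
      set tb : η →₀ MonoidAlgebra k (FreeMonoid B) :=
        t.mapRange (fun f => D b f) (map_zero _) with htb
      have hsum : (tb.sum fun i a => u i * a) = 0 := by
        rw [htb, Finsupp.sum_mapRange_index (by simp)]
        exact hgb
      have hlen' : ∀ i, ∀ w ∈ (tb i : A).coeff.support, (FreeMonoid.toList w).length ≤ n := by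
        intro i w hw
        rw [htb, Finsupp.mapRange_apply] at hw
        have hw' : (t i : A).coeff (w * FreeMonoid.of b) ≠ 0 := by
          rw [← D_apply b]
          exact Finsupp.mem_support_iff.1 hw
        have := hlen i _ (Finsupp.mem_support_iff.2 hw')
        rw [FreeMonoid.toList_mul] at this
        have h2 : (FreeMonoid.toList w).length + 1 ≤ n + 1 := by
          simpa [FreeMonoid.toList_of] using this
        omega
      have := ih tb hlen' hsum
      intro i
      have := congrArg (fun f => f i) this
      simpa [htb, Finsupp.mapRange_apply] using this
    refine Finsupp.ext fun i => ?_
    have hdec : decomp (t i) = 0 := Finsupp.ext fun b => by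
      rw [decomp_apply, hDb b i]; rfl
    have := Psi_decomp (hone i)
    rw [hdec, map_zero] at this
    exact this.symm

lemma faithA (U : Submodule k (MonoidAlgebra k (FreeMonoid B)))
    (hU : U ⊓ (U * (letterSpan k B * ⊤)) = ⊥)
    (u : η → MonoidAlgebra k (FreeMonoid B)) (hu : ∀ i, u i ∈ U)
    (hind : LinearIndependent k u)
    (t : η →₀ MonoidAlgebra k (FreeMonoid B))
    (h0 : (t.sum fun i a => u i * a) = 0) : t = 0 := by
  classical
  refine faith_core U hU u hu hind
    (t.support.sup fun i => (t i : A).coeff.support.sup fun w => (FreeMonoid.toList w).length)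
    t (fun i w hw => ?_) h0
  by_cases hi : i ∈ t.support
  · exact le_trans (Finset.le_sup hw)
      (Finset.le_sup (f := fun i => ((t i : MonoidAlgebra k (FreeMonoid B)).coeff.support.sup
        fun w => (FreeMonoid.toList w).length)) hi)
  · rw [Finsupp.notMem_support_iff.1 hi] at hw
    simp at hw

section Transfer

variable {k V : Type*} [Field k] [AddCommGroup V] [Module k V]

lemma faithT {η : Type*} (U : Submodule k (TensorAlgebra k V))
    (hU : U ⊓ (U * (LinearMap.range (TensorAlgebra.ι k (M := V)) * ⊤)) = ⊥)
    (u : η → TensorAlgebra k V) (hu : ∀ i, u i ∈ U) (hind : LinearIndependent k u)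
    (t : η →₀ TensorAlgebra k V) (h0 : (t.sum fun i a => u i * a) = 0) : t = 0 := by
  classical
  set bV := Module.Basis.ofVectorSpace k V with hbV
  set e : TensorAlgebra k V ≃ₐ[k] MonoidAlgebra k (FreeMonoid (Module.Basis.ofVectorSpaceIndex k V)) :=
    (TensorAlgebra.equivFreeAlgebra bV).trans FreeAlgebra.equivMonoidAlgebraFreeMonoid with he
  have heι : ∀ i, e (TensorAlgebra.ι k (bV i)) = X i := by
    intro i
    rw [he, AlgEquiv.trans_apply, TensorAlgebra.equivFreeAlgebra_ι_apply]
    simp [FreeAlgebra.equivMonoidAlgebraFreeMonoid, MonoidAlgebra.of_apply, X]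
  have hrange : Submodule.map e.toLinearMap (LinearMap.range (TensorAlgebra.ι k (M := V)))
      = letterSpan k (Module.Basis.ofVectorSpaceIndex k V) := by
    rw [LinearMap.range_eq_map, ← bV.span_eq, Submodule.map_span, Submodule.map_span,
      letterSpan, ← Set.range_comp, ← Set.range_comp]
    congr 1
    exact congrArg Set.range (funext fun i => heι i)
  have htop : Submodule.map e.toLinearMap (⊤ : Submodule k (TensorAlgebra k V)) = ⊤ := by
    rw [Submodule.map_top, LinearMap.range_eq_top]
    exact e.surjective
  have hUm : (Submodule.map e.toLinearMap U) ⊓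
      (Submodule.map e.toLinearMap U * (letterSpan k (Module.Basis.ofVectorSpaceIndex k V) * ⊤)) = ⊥ := by
    have h1 := congrArg (Submodule.map e.toLinearMap) hU
    rw [Submodule.map_inf e.toLinearMap e.injective, Submodule.map_bot] at h1
    rw [← h1]
    congr 1
    have h2 := Submodule.map_mul (M := U)
      (N := LinearMap.range (TensorAlgebra.ι k (M := V)) * ⊤) (f := e.toAlgHom)
    have h3 := Submodule.map_mul (M := LinearMap.range (TensorAlgebra.ι k (M := V)))
      (N := (⊤ : Submodule k (TensorAlgebra k V))) (f := e.toAlgHom)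
    have hfg : (e.toAlgHom : TensorAlgebra k V →ₐ[k]
        MonoidAlgebra k (FreeMonoid (Module.Basis.ofVectorSpaceIndex k V))).toLinearMap
        = e.toLinearMap := rfl
    rw [hfg] at h2 h3
    rw [h2, h3, hrange, htop]
  have ht' : ((t.mapRange e (map_zero e)).sum fun i a => e (u i) * a) = 0 := by
    rw [Finsupp.sum_mapRange_index (by simp)]
    have : (t.sum fun i a => e (u i) * e a) = e (t.sum fun i a => u i * a) := by
      rw [map_finsuppSum]
      exact Finsupp.sum_congr fun i _ => (map_mul e _ _).symm
    rw [this, h0, map_zero]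
  have := faithA (Submodule.map e.toLinearMap U) hUm (fun i => e (u i))
    (fun i => Submodule.mem_map_of_mem (hu i))
    (by
      have := hind.map' e.toLinearMap (LinearMap.ker_eq_bot.2 e.injective)
      exact this)
    (t.mapRange e (map_zero e)) ht'
  refine Finsupp.ext fun i => ?_
  have := congrArg (fun f => f i) this
  simp only [Finsupp.mapRange_apply, Finsupp.coe_zero, Pi.zero_apply] at this
  exact e.injective (by simp [this])

end Transfer

lemma mem_mul_repr {k T : Type*} [Field k] [Ring T] [Algebra k T] {ι : Type*}
    (M N : Submodule k T) (b : Module.Basis ι k ↥M) {x : T} (hx : x ∈ M * N) :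
    ∃ t : ι →₀ T, (∀ i, t i ∈ N) ∧ x = t.sum fun i a => (b i : T) * a := by
  classical
  refine Submodule.mul_induction_on hx ?_ ?_
  · intro m hm n hn
    refine ⟨(b.repr ⟨m, hm⟩).mapRange (fun r => r • n) (zero_smul k n), fun i => ?_, ?_⟩
    · rw [Finsupp.mapRange_apply]
      exact Submodule.smul_mem _ _ hn
    · rw [Finsupp.sum_mapRange_index (by simp)]
      have e1 : ((b.repr ⟨m, hm⟩).sum fun i r => (b i : T) * (r • n)) =
          ((b.repr ⟨m, hm⟩).sum fun i r => (r • (b i : T)) * n) :=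
        Finsupp.sum_congr fun i _ => by rw [mul_smul_comm, smul_mul_assoc]
      rw [e1, Finsupp.sum, ← Finset.sum_mul]
      have h2 := congrArg (fun y : ↥M => (y : T)) (b.linearCombination_repr ⟨m, hm⟩)
      rw [Finsupp.linearCombination_apply, Finsupp.sum] at h2
      simp only at h2
      push_cast at h2
      rw [h2]
  · rintro y z ⟨ty, hty, rfl⟩ ⟨tz, htz, rfl⟩
    exact ⟨ty + tz, fun i => by
        rw [Finsupp.add_apply]; exact Submodule.add_mem _ (hty i) (htz i),
      by rw [Finsupp.sum_add_index' (fun i => mul_zero _) (fun i a c => mul_add _ _ _)]⟩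

end InterProdAux

namespace InterProdAux

set_option synthInstance.maxHeartbeats 1000000 in
set_option maxHeartbeats 2000000 in
theorem main
    {k V : Type*} [Field k] [AddCommGroup V] [Module k V]
    (U' U W' W : Submodule k (TensorAlgebra k V))
    (hU'U : U' ≤ U) (hW'W : W' ≤ W)
    (hU : U ⊓ (U * (LinearMap.range (TensorAlgebra.ι k (M := V)) * ⊤)) = ⊥) :
    (U' * W) ⊓ (U * W') = U' * W' := by
  classical
  refine le_antisymm ?_ (le_inf (mul_le_mul' le_rfl hW'W)
    (mul_le_mul' hU'U le_rfl))
  intro x hx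
  obtain ⟨hx1, hx2⟩ := hx
  -- set up bases
  set U'c : Submodule k ↥U := U'.comap U.subtype with hU'c
  obtain ⟨C, hC⟩ := Submodule.exists_isCompl U'c
  set b1 := Module.Basis.ofVectorSpace k ↥U'c
  set b2 := Module.Basis.ofVectorSpace k ↥C
  set equiv := Submodule.prodEquivOfIsCompl U'c C hC
  set bU := (b1.prod b2).map equiv with hbU
  set bU' := b1.map (Submodule.comapSubtypeEquivOfLe (hU'U : U' ≤ U)) with hbU'
  have hcompat : ∀ i, ((bU' i : ↥U') : TensorAlgebra k V)
      = ((bU (Sum.inl i) : ↥U) : TensorAlgebra k V) := by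
    intro i
    rw [hbU, hbU', Module.Basis.map_apply, Module.Basis.map_apply]
    rw [Submodule.comapSubtypeEquivOfLe_apply_coe]
    have hp : (b1.prod b2) (Sum.inl i) = (b1 i, 0) :=
      Prod.ext (Module.Basis.prod_apply_inl_fst _ _ _) (Module.Basis.prod_apply_inl_snd _ _ _)
    rw [hp, Submodule.coe_prodEquivOfIsCompl']
    rw [show ((0 : ↥C) : ↥U) = 0 from rfl, add_zero]
  have hbUmem : ∀ j, ((bU j : ↥U) : TensorAlgebra k V) ∈ U := fun j => (bU j).2
  have hbU'mem : ∀ i, ((bU' i : ↥U') : TensorAlgebra k V) ∈ U' := fun i => (bU' i).2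
  obtain ⟨f, hfW', hxf⟩ := InterProdAux.mem_mul_repr U W' bU hx2
  obtain ⟨g, hgW, hxg⟩ := InterProdAux.mem_mul_repr U' W bU' hx1
  set g' : (_ ⊕ _) →₀ TensorAlgebra k V :=
    g.embDomain ⟨Sum.inl, Sum.inl_injective⟩ with hg'
  have hg'sum : (g'.sum fun j a => ((bU j : ↥U) : TensorAlgebra k V) * a) = x := by
    rw [hg', Finsupp.sum_embDomain]
    rw [hxg]
    simp only [Function.Embedding.coeFn_mk]
    exact Finsupp.sum_congr fun i _ => by rw [hcompat i]
  have ht0 : ((f - g').sum fun j a => ((bU j : ↥U) : TensorAlgebra k V) * a) = 0 := by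
    rw [Finsupp.sum_sub_index (fun j a b => mul_sub _ _ _), hg'sum, ← hxf, sub_self]
  have hfaith := InterProdAux.faithT U hU (fun j => ((bU j : ↥U) : TensorAlgebra k V))
    hbUmem (bU.linearIndependent.map' U.subtype U.ker_subtype) (f - g') ht0
  have hfg : f = g' := sub_eq_zero.1 hfaith
  rw [hxg, Finsupp.sum]
  refine Submodule.sum_mem _ fun i _ => ?_
  have hgiW' : g i ∈ W' := by
    have h1 : g' (Sum.inl i) = g i := Finsupp.embDomain_apply_self _ _ _
    rw [← h1, ← hfg]
    exact hfW' _
  exact Submodule.mul_mem_mul (hbU'mem i) hgiW'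

end InterProdAux

/-- If `U' ⊆ U ⊆ T(V)` with `U` left tensor-intersection faithful (expressed by the
equivalent condition `U ∩ (U·T(V)_{>0}) = 0`, with `T(V)_{>0}` formalized as `V·T(V)`),
and `W' ⊆ W ⊆ T(V)` are arbitrary subspaces, then `(U'·W) ∩ (U·W') = U'·W'`
as subspaces of `T(V)`. -/
theorem inter_product_subspaces
    {k V : Type*} [Field k] [AddCommGroup V] [Module k V]
    (U' U W' W : Submodule k (TensorAlgebra k V))
    (hU'U : U' ≤ U) (hW'W : W' ≤ W)
    (hU : U ⊓ (U * (LinearMap.range (TensorAlgebra.ι k (M := V)) * ⊤)) = ⊥) :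
    (U' * W) ⊓ (U * W') = U' * W' := by
  exact InterProdAux.main U' U W' W hU'U hW'W hU
end

section
/- Let U ⊆ T(V) be left tensor-intersection faithful and W ⊆ T(V) any subspace. Given vector spaces U', W' and linear maps f : U → U', g : W → W', the assignment Σ u_i ⊗ w_i ↦ Σ f(u_i) ⊗ g(w_i) gives a well-defined linear map from the product subspace U ⊗ W ⊆ T(V) to the abstract tensor product U' ⊗_k W'. -/
open scoped TensorProduct

namespace WDTM

open TensorAlgebra

section BasisMul

variable (k : Type*) [CommSemiring k] (X : Type*)

lemma fa_basis_mul (w w' : FreeMonoid X) :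
    FreeAlgebra.basisFreeMonoid k X (w * w') =
      FreeAlgebra.basisFreeMonoid k X w * FreeAlgebra.basisFreeMonoid k X w' := by
  simp only [FreeAlgebra.basisFreeMonoid, Module.Basis.map_apply, Finsupp.coe_basisSingleOne,
    AlgEquiv.toLinearEquiv_apply]
  show FreeAlgebra.equivMonoidAlgebraFreeMonoid.symm (MonoidAlgebra.single (w * w') (1 : k)) =
    FreeAlgebra.equivMonoidAlgebraFreeMonoid.symm (MonoidAlgebra.single w (1 : k)) *
    FreeAlgebra.equivMonoidAlgebraFreeMonoid.symm (MonoidAlgebra.single w' (1 : k))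
  rw [← map_mul, MonoidAlgebra.single_mul_single, one_mul]

lemma fa_basis_one : FreeAlgebra.basisFreeMonoid k X (1 : FreeMonoid X) = 1 := by
  simp only [FreeAlgebra.basisFreeMonoid, Module.Basis.map_apply, Finsupp.coe_basisSingleOne,
    AlgEquiv.toLinearEquiv_apply]
  show FreeAlgebra.equivMonoidAlgebraFreeMonoid.symm (MonoidAlgebra.single 1 (1 : k)) = 1
  rw [← MonoidAlgebra.one_def, map_one]

lemma fa_basis_of (x : X) :
    FreeAlgebra.basisFreeMonoid k X (FreeMonoid.of x) = FreeAlgebra.ι k x := by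
  simp only [FreeAlgebra.basisFreeMonoid, Module.Basis.map_apply, Finsupp.coe_basisSingleOne,
    AlgEquiv.toLinearEquiv_apply]
  show FreeAlgebra.equivMonoidAlgebraFreeMonoid.symm
    (MonoidAlgebra.single (FreeMonoid.of x) (1 : k)) = FreeAlgebra.ι k x
  rw [AlgEquiv.symm_apply_eq]
  have : FreeAlgebra.equivMonoidAlgebraFreeMonoid (FreeAlgebra.ι k x)
      = MonoidAlgebra.of k (FreeMonoid X) (FreeMonoid.of x) := FreeAlgebra.lift_ι_apply _ _
  rw [this, MonoidAlgebra.of_apply]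

variable {k X}
variable {V : Type*} [AddCommMonoid V] [Module k V] {κ : Type*} (b : Module.Basis κ k V)

lemma ta_basis_mul (w w' : FreeMonoid κ) :
    b.tensorAlgebra (w * w') = b.tensorAlgebra w * b.tensorAlgebra w' := by
  simp only [Module.Basis.tensorAlgebra, Module.Basis.map_apply, AlgEquiv.toLinearEquiv_apply]
  rw [fa_basis_mul, map_mul]

lemma ta_basis_one : b.tensorAlgebra (1 : FreeMonoid κ) = 1 := by
  simp only [Module.Basis.tensorAlgebra, Module.Basis.map_apply, AlgEquiv.toLinearEquiv_apply]
  rw [fa_basis_one, map_one]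

lemma ta_basis_of (x : κ) :
    b.tensorAlgebra (FreeMonoid.of x) = TensorAlgebra.ι k (b x) := by
  simp only [Module.Basis.tensorAlgebra, Module.Basis.map_apply, AlgEquiv.toLinearEquiv_apply]
  rw [fa_basis_of, equivFreeAlgebra_symm_ι]

end BasisMul

section Key

variable {k V : Type*} [Field k] [AddCommGroup V] [Module k V]
variable {κ : Type*} (b : Module.Basis κ k V)

/-- The word basis of the tensor algebra, indexed by lists. -/
noncomputable def LB : Module.Basis (List κ) k (TensorAlgebra k V) :=
  (b.tensorAlgebra).reindex FreeMonoid.toList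

lemma LB_append (l l' : List κ) : LB b (l ++ l') = LB b l * LB b l' := by
  simp only [LB, Module.Basis.reindex_apply]
  rw [show (FreeMonoid.toList.symm (l ++ l') : FreeMonoid κ)
      = FreeMonoid.toList.symm l * FreeMonoid.toList.symm l' from rfl, ta_basis_mul]

lemma LB_nil : LB b ([] : List κ) = 1 := by
  simp only [LB, Module.Basis.reindex_apply]
  exact ta_basis_one b

lemma LB_single (j : κ) : LB b [j] = TensorAlgebra.ι k (b j) := by
  simp only [LB, Module.Basis.reindex_apply]
  exact ta_basis_of b j

variable [DecidableEq κ]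

/-- "Strip the last letter `j`" operator. -/
noncomputable def Rj (j : κ) : TensorAlgebra k V →ₗ[k] TensorAlgebra k V :=
  (LB b).constr k fun l => if l.getLast? = some j then LB b l.dropLast else 0

lemma Rj_mul (j i : κ) (t : TensorAlgebra k V) :
    Rj b j (t * TensorAlgebra.ι k (b i)) = if i = j then t else 0 := by
  have h : (Rj b j).comp (LinearMap.mulRight k (TensorAlgebra.ι k (b i)))
      = if i = j then LinearMap.id else 0 := by
    apply (LB b).ext
    intro l
    simp only [LinearMap.comp_apply, LinearMap.mulRight_apply]
    rw [← LB_single b i, ← LB_append b l [i], Rj, Module.Basis.constr_basis]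
    by_cases hij : i = j
    · subst hij
      simp [List.getLast?_concat, List.dropLast_concat]
    · simp [List.getLast?_concat, hij, Option.some_inj]
  have h2 := LinearMap.congr_fun h t
  simp only [LinearMap.comp_apply, LinearMap.mulRight_apply] at h2
  rw [h2]
  by_cases hij : i = j
  · simp [hij]
  · simp [hij]

lemma key (U : Submodule k (TensorAlgebra k V))
    (hU : U ⊓ (U * (LinearMap.range (TensorAlgebra.ι k (M := V)) * ⊤)) = ⊥) :
    ∀ (N : ℕ) (s : Finset (List κ)) (c : List κ → U),
      (∀ w ∈ s, w.length ≤ N) →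
      (∑ w ∈ s, ((c w : TensorAlgebra k V) * LB b w)) = 0 →
      ∀ w ∈ s, c w = 0 := by
  classical
  intro N
  induction N with
  | zero =>
    intro s c hlen hsum w hw
    have hnil : ∀ x ∈ s, x = [] := fun x hx =>
      List.eq_nil_of_length_eq_zero (Nat.le_zero.mp (hlen x hx))
    have hs : s = {([] : List κ)} := Finset.eq_singleton_iff_unique_mem.mpr ⟨hnil w hw ▸ hw, hnil⟩
    rw [hs, Finset.sum_singleton, LB_nil, mul_one] at hsum
    rw [hnil w hw]
    exact Subtype.ext hsum
  | succ N ih =>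
    intro s c hlen hsum
    set s' := s.erase [] with hs'
    -- the sum over nonempty words lies in U * (I * ⊤)
    have hmem : ∑ w ∈ s', (c w : TensorAlgebra k V) * LB b w ∈
        U * (LinearMap.range (TensorAlgebra.ι k (M := V)) * ⊤) := by
      apply Submodule.sum_mem
      intro w hw
      have hne : w ≠ [] := Finset.ne_of_mem_erase hw
      obtain ⟨i, L, rfl⟩ : ∃ i L, w = i :: L := by
        cases w with
        | nil => exact absurd rfl hne
        | cons i L => exact ⟨i, L, rfl⟩
      have : LB b (i :: L) ∈ (LinearMap.range (TensorAlgebra.ι k (M := V)) * ⊤) := by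
        rw [show (i :: L) = [i] ++ L from rfl, LB_append, LB_single]
        exact Submodule.mul_mem_mul (LinearMap.mem_range_self _ _) Submodule.mem_top
      exact Submodule.mul_mem_mul (c (i :: L)).2 this
    have hnil : ([] ∈ s → c [] = 0) ∧ ∑ w ∈ s', (c w : TensorAlgebra k V) * LB b w = 0 := by
      by_cases h0 : ([] : List κ) ∈ s
      · have h1 : (c [] : TensorAlgebra k V)
            + ∑ w ∈ s', (c w : TensorAlgebra k V) * LB b w = 0 := by
          rw [← hsum, ← Finset.add_sum_erase s _ h0, LB_nil, mul_one]
        have h2 : (c [] : TensorAlgebra k V) ∈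
            U ⊓ (U * (LinearMap.range (TensorAlgebra.ι k (M := V)) * ⊤)) := by
          refine ⟨(c []).2, ?_⟩
          have : (c [] : TensorAlgebra k V)
              = -∑ w ∈ s', (c w : TensorAlgebra k V) * LB b w := by
            rw [eq_neg_iff_add_eq_zero]; exact h1
          rw [this]
          exact neg_mem hmem
        rw [hU, Submodule.mem_bot] at h2
        have h3 : c [] = 0 := Subtype.ext h2
        constructor
        · intro _; exact h3
        · have := h1
          rw [h2, zero_add] at this
          exact this
      · constructor
        · intro h; exact absurd h h0
        · rw [hs', Finset.erase_eq_of_notMem h0]; exact hsum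
    have hstrip : ∀ j : κ, ∀ w' ∈ (s'.filter fun w => w.getLast? = some j).image List.dropLast,
        c (w' ++ [j]) = 0 := by
      intro j
      have hclast : ∀ w ∈ s'.filter fun w => w.getLast? = some j, w.dropLast ++ [j] = w := by
        intro w hw
        have := (Finset.mem_filter.mp hw).2
        exact List.dropLast_append_getLast? j this
      have h4 : ∑ w ∈ s', Rj b j ((c w : TensorAlgebra k V) * LB b w) = 0 := by
        rw [← map_sum, hnil.2, map_zero]
      have h5 : ∀ w ∈ s', Rj b j ((c w : TensorAlgebra k V) * LB b w)
          = if w.getLast? = some j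
              then (c w : TensorAlgebra k V) * LB b w.dropLast else 0 := by
        intro w hw
        have hne : w ≠ [] := Finset.ne_of_mem_erase hw
        obtain ⟨L, i, rfl⟩ := (List.eq_nil_or_concat' w).resolve_left hne
        rw [LB_append, LB_single, ← mul_assoc, Rj_mul]
        rw [List.getLast?_concat, List.dropLast_concat]
        by_cases hij : i = j
        · simp [hij]
        · simp [hij, Option.some_inj]
      rw [Finset.sum_congr rfl h5, ← Finset.sum_filter] at h4
      have h6 : ∑ w' ∈ (s'.filter fun w => w.getLast? = some j).image List.dropLast,
          (c (w' ++ [j]) : TensorAlgebra k V) * LB b w' = 0 := by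
        rw [Finset.sum_image ?hinj]
        case hinj =>
          intro w1 h1 w2 h2 hd
          rw [← hclast w1 h1, ← hclast w2 h2, hd]
        rw [← h4]
        apply Finset.sum_congr rfl
        intro w hw
        rw [hclast w hw]
      refine ih _ _ ?_ h6
      intro w' hw'
      obtain ⟨w, hw, rfl⟩ := Finset.mem_image.mp hw'
      have hwlen : w.length ≤ N + 1 := hlen w (Finset.mem_of_mem_erase (Finset.mem_filter.mp hw).1)
      rw [List.length_dropLast]
      omega
    intro w hw
    rcases List.eq_nil_or_concat' w with rfl | ⟨L, i, rfl⟩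
    · exact hnil.1 hw
    · refine hstrip i L (Finset.mem_image.mpr ⟨L ++ [i], ?_, List.dropLast_concat⟩)
      refine Finset.mem_filter.mpr ⟨Finset.mem_erase.mpr ⟨?_, hw⟩, List.getLast?_concat (l := L)⟩
      simp

end Key

section Main

variable {k V : Type*} [Field k] [AddCommGroup V] [Module k V]

/-- The multiplication map `U ⊗ T(V) → T(V)`. -/
noncomputable def mulT (U : Submodule k (TensorAlgebra k V)) :
    (U ⊗[k] TensorAlgebra k V) →ₗ[k] TensorAlgebra k V :=
  TensorProduct.lift ((LinearMap.mul k (TensorAlgebra k V)).comp U.subtype)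

lemma mulT_injective (U : Submodule k (TensorAlgebra k V))
    (hU : U ⊓ (U * (LinearMap.range (TensorAlgebra.ι k (M := V)) * ⊤)) = ⊥) :
    Function.Injective (mulT U) := by
  classical
  set b := Module.Basis.ofVectorSpace k V with hb
  set B := LB b with hB
  set Φ : (U ⊗[k] TensorAlgebra k V) ≃ₗ[k] (List (Module.Basis.ofVectorSpaceIndex k V) →₀ U) :=
    (TensorProduct.congr (LinearEquiv.refl k U) B.repr).trans
      (TensorProduct.finsuppScalarRight k k U _) with hΦ
  set Sc : (List (Module.Basis.ofVectorSpaceIndex k V) →₀ U) →ₗ[k] TensorAlgebra k V :=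
    Finsupp.lsum k (fun w => (LinearMap.mulRight k (B w)).comp U.subtype) with hSc
  have hfact : (mulT U).comp (Φ.symm : _ →ₗ[k] _) = Sc := by
    apply Finsupp.lhom_ext
    intro w u
    have h1 : Φ.symm (Finsupp.single w u) = u ⊗ₜ[k] B w := by
      rw [hΦ]
      rw [LinearEquiv.trans_symm, LinearEquiv.trans_apply,
        TensorProduct.finsuppScalarRight_symm_apply_single,
        TensorProduct.congr_symm_tmul]
      simp [Module.Basis.repr_symm_single_one]
    simp only [LinearMap.comp_apply, LinearEquiv.coe_coe, h1]
    rw [hSc]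
    simp [mulT]
  refine (LinearMap.ker_eq_bot (M := U ⊗[k] TensorAlgebra k V) (f := mulT U)).mp ?_
  rw [Submodule.eq_bot_iff]
  intro x hx
  rw [LinearMap.mem_ker] at hx
  have hx2 : Sc (Φ x) = 0 := by
    rw [← hfact]
    simp only [LinearMap.comp_apply, LinearEquiv.coe_coe, LinearEquiv.symm_apply_apply]
    exact hx
  have hsum : ∑ w ∈ (Φ x).support, ((Φ x) w : TensorAlgebra k V) * B w = 0 := by
    rw [← hx2, hSc]
    rw [Finsupp.lsum_apply]
    rfl
  have hz := key b U hU ((Φ x).support.sup List.length) (Φ x).support (fun w => Φ x w)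
    (fun w hw => Finset.le_sup hw) hsum
  have hΦ0 : Φ x = 0 := by
    ext w : 1
    rw [Finsupp.coe_zero, Pi.zero_apply]
    by_cases hw : w ∈ (Φ x).support
    · exact hz w hw
    · exact Finsupp.notMem_support_iff.mp hw
  have := congrArg Φ.symm hΦ0
  simpa using this

end Main

end WDTM

/-- If `U ⊆ T(V)` is left tensor-intersection faithful (expressed by the equivalent
condition `U ∩ (U·T(V)_{>0}) = 0`, `T(V)_{>0}` formalized as `V·T(V)`), `W ⊆ T(V)` is
any subspace, and `f : U → U'`, `g : W → W'` are linear maps into arbitrary vector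
spaces, then `Σ uᵢ·wᵢ ↦ Σ f(uᵢ) ⊗ g(wᵢ)` yields a well-defined linear map from the
product subspace `U·W ⊆ T(V)` to the abstract tensor product `U' ⊗ W'`. -/
theorem well_defined_tensor_map
    {k V : Type*} [Field k] [AddCommGroup V] [Module k V]
    (U W : Submodule k (TensorAlgebra k V))
    (hU : U ⊓ (U * (LinearMap.range (TensorAlgebra.ι k (M := V)) * ⊤)) = ⊥)
    {U' W' : Type*} [AddCommGroup U'] [Module k U'] [AddCommGroup W'] [Module k W']
    (f : U →ₗ[k] U') (g : W →ₗ[k] W') :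
    ∃ h : (U * W : Submodule k (TensorAlgebra k V)) →ₗ[k] (U' ⊗[k] W'),
      ∀ (u : U) (w : W),
        h ⟨(u : TensorAlgebra k V) * (w : TensorAlgebra k V),
            Submodule.mul_mem_mul u.2 w.2⟩ = f u ⊗ₜ[k] g w := by
  classical
  haveI hfree : Module.Free k ↥U := Module.Free.of_divisionRing k ↥U
  haveI hflat : Module.Flat k ↥U := Module.Flat.of_free
  have h1 : Function.Injective (LinearMap.lTensor (↥U) W.subtype) :=
    Module.Flat.lTensor_preserves_injective_linearMap W.subtype Subtype.val_injective
  have h2 : Submodule.mulMap U W = (WDTM.mulT U).comp (LinearMap.lTensor (↥U) W.subtype) := by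
    apply TensorProduct.ext'
    intro u w
    simp only [Submodule.mulMap_tmul, LinearMap.comp_apply, LinearMap.lTensor_tmul]
    rfl
  have h3 : Function.Injective ⇑(Submodule.mulMap U W) := by
    rw [h2, LinearMap.coe_comp]
    exact Function.Injective.comp (WDTM.mulT_injective U hU) h1
  have hval : ∀ z : U ⊗[k] W, (Submodule.mulMap' U W z : TensorAlgebra k V)
      = Submodule.mulMap U W z := fun z => rfl
  have h4 : Function.Injective ⇑(Submodule.mulMap' U W) := by
    intro x y hxy
    apply h3
    rw [← hval x, ← hval y, hxy]
  let e : (U ⊗[k] W) ≃ₗ[k] (U * W : Submodule k (TensorAlgebra k V)) :=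
    LinearEquiv.ofBijective (Submodule.mulMap' U W) ⟨h4, Submodule.mulMap'_surjective U W⟩
  refine ⟨(TensorProduct.map f g).comp (e.symm : _ →ₗ[k] _), ?_⟩
  intro u w
  have he : e (u ⊗ₜ[k] w) = ⟨(u : TensorAlgebra k V) * (w : TensorAlgebra k V),
      Submodule.mul_mem_mul u.2 w.2⟩ := by
    apply Subtype.ext
    exact Submodule.val_mulMap'_tmul u w
  have hs : e.symm ⟨(u : TensorAlgebra k V) * (w : TensorAlgebra k V),
      Submodule.mul_mem_mul u.2 w.2⟩ = u ⊗ₜ[k] w := by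
    rw [← he, LinearEquiv.symm_apply_apply]
  simp only [LinearMap.comp_apply, LinearEquiv.coe_coe, hs, TensorProduct.map_tmul]
end

section
/- Let V be a vector space, R ⊆ T(V) a subspace with R ∩ (T(V)_{>0}⊗R⊗T(V) + T(V)⊗R⊗T(V)_{>0}) = 0, and for i ≥ 1 set R^{(i)} = R ⊗ ⋯ ⊗ R (i factors, product inside T(V)). Then for each i ≥ 1 the family of subspaces {⋂_{j=0}^{N} V^{(j)} ⊗ R^{(i)} ⊗ V^{(N-j)}}_{N ≥ 0} of T(V) is independent, i.e., their sum in T(V) is direct. -/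
open Submodule

namespace PIIproof

variable {k : Type*} [Field k] {κ : Type*}

/-- a letter as an element of the monoid algebra -/
noncomputable def sig (k : Type*) [Field k] {κ : Type*} (c : κ) :
    MonoidAlgebra k (FreeMonoid κ) :=
  MonoidAlgebra.single (FreeMonoid.of c) 1

/-- the span of the letters -/
noncomputable def SS (k κ : Type*) [Field k] : Submodule k (MonoidAlgebra k (FreeMonoid κ)) :=
  span k (Set.range (fun c : κ => sig k c))

lemma sig_mem_SS (c : κ) : sig k c ∈ SS k κ := subset_span ⟨c, rfl⟩

/-- strip a letter from the left -/
noncomputable def lam (c : κ) :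
    MonoidAlgebra k (FreeMonoid κ) →ₗ[k] MonoidAlgebra k (FreeMonoid κ) :=
  (MonoidAlgebra.coeffLinearEquiv k).symm.toLinearMap ∘ₗ
  Finsupp.lcomapDomain (fun w => FreeMonoid.of c * w) (mul_right_injective _) ∘ₗ
    (MonoidAlgebra.coeffLinearEquiv k).toLinearMap

/-- strip a letter from the right -/
noncomputable def rho (c : κ) :
    MonoidAlgebra k (FreeMonoid κ) →ₗ[k] MonoidAlgebra k (FreeMonoid κ) :=
  (MonoidAlgebra.coeffLinearEquiv k).symm.toLinearMap ∘ₗ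
  Finsupp.lcomapDomain (fun w => w * FreeMonoid.of c) (mul_left_injective _) ∘ₗ
    (MonoidAlgebra.coeffLinearEquiv k).toLinearMap

lemma lam_apply (c : κ) (x : MonoidAlgebra k (FreeMonoid κ)) (w : FreeMonoid κ) :
    (lam c x).coeff w = x.coeff (FreeMonoid.of c * w) := rfl

lemma rho_apply (c : κ) (x : MonoidAlgebra k (FreeMonoid κ)) (w : FreeMonoid κ) :
    (rho c x).coeff w = x.coeff (w * FreeMonoid.of c) := rfl

lemma eq_one_or_cons (w : FreeMonoid κ) : w = 1 ∨ ∃ c u, w = FreeMonoid.of c * u := by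
  rcases hl : FreeMonoid.toList w with _ | ⟨c, l⟩
  · left
    have := congrArg FreeMonoid.ofList hl
    simpa using this
  · right
    refine ⟨c, FreeMonoid.ofList l, ?_⟩
    have := congrArg FreeMonoid.ofList hl
    simpa [FreeMonoid.ofList_cons] using this

lemma eq_one_or_concat (w : FreeMonoid κ) : w = 1 ∨ ∃ u c, w = u * FreeMonoid.of c := by
  rcases List.eq_nil_or_concat (FreeMonoid.toList w) with hl | ⟨l, c, hl⟩
  · left
    have := congrArg FreeMonoid.ofList hl
    simpa using this
  · right
    refine ⟨FreeMonoid.ofList l, c, ?_⟩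
    have := congrArg FreeMonoid.ofList hl
    rw [FreeMonoid.ofList_toList] at this
    rw [this, List.concat_eq_append]
    rfl

lemma concat_eq_concat {u w : FreeMonoid κ} {c c' : κ}
    (h : u * FreeMonoid.of c' = w * FreeMonoid.of c) : u = w ∧ c' = c := by
  have h2 : FreeMonoid.toList u ++ [c'] = FreeMonoid.toList w ++ [c] := congrArg FreeMonoid.toList h
  obtain ⟨h3, h4⟩ := List.append_inj' h2 rfl
  refine ⟨FreeMonoid.toList.injective h3, ?_⟩
  injection h4

lemma sig_mul (c : κ) (y : MonoidAlgebra k (FreeMonoid κ)) :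
    sig k c * y = MonoidAlgebra.mapDomain (fun w => FreeMonoid.of c * w) y := by
  induction y using MonoidAlgebra.induction_linear with
  | zero => simp
  | add f g hf hg => rw [mul_add, hf, hg, MonoidAlgebra.mapDomain_add]
  | single w b =>
    rw [sig, MonoidAlgebra.single_mul_single,
      MonoidAlgebra.mapDomain_single, one_mul]

lemma mul_sig (c : κ) (y : MonoidAlgebra k (FreeMonoid κ)) :
    y * sig k c = MonoidAlgebra.mapDomain (fun w => w * FreeMonoid.of c) y := by
  induction y using MonoidAlgebra.induction_linear with
  | zero => simp
  | add f g hf hg => rw [add_mul, hf, hg, MonoidAlgebra.mapDomain_add]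
  | single w b =>
    rw [sig, MonoidAlgebra.single_mul_single,
      MonoidAlgebra.mapDomain_single, mul_one]

lemma lam_sig_mul_same (c : κ) (y : MonoidAlgebra k (FreeMonoid κ)) :
    lam c (sig k c * y) = y := by
  rw [sig_mul]
  refine MonoidAlgebra.ext (Finsupp.ext fun w => ?_)
  rw [lam_apply, MonoidAlgebra.coeff_mapDomain]
  rw [Finsupp.mapDomain_apply (mul_right_injective _)]

lemma lam_sig_mul_ne {c c' : κ} (h : c' ≠ c) (y : MonoidAlgebra k (FreeMonoid κ)) :
    lam c (sig k c' * y) = 0 := by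
  rw [sig_mul]
  refine MonoidAlgebra.ext (Finsupp.ext fun w => ?_)
  rw [lam_apply, MonoidAlgebra.coeff_mapDomain]
  rw [Finsupp.mapDomain_notin_range]
  · simp
  · rintro ⟨u, hu⟩
    apply h
    have h2 : c' :: FreeMonoid.toList u = c :: FreeMonoid.toList w :=
      congrArg FreeMonoid.toList hu
    injection h2

lemma rho_mul_sig_same (c : κ) (y : MonoidAlgebra k (FreeMonoid κ)) :
    rho c (y * sig k c) = y := by
  rw [mul_sig]
  refine MonoidAlgebra.ext (Finsupp.ext fun w => ?_)
  rw [rho_apply, MonoidAlgebra.coeff_mapDomain]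
  rw [Finsupp.mapDomain_apply (mul_left_injective _)]

lemma rho_mul_sig_ne {c c' : κ} (h : c' ≠ c) (y : MonoidAlgebra k (FreeMonoid κ)) :
    rho c (y * sig k c') = 0 := by
  rw [mul_sig]
  refine MonoidAlgebra.ext (Finsupp.ext fun w => ?_)
  rw [rho_apply, MonoidAlgebra.coeff_mapDomain]
  rw [Finsupp.mapDomain_notin_range]
  · simp
  · rintro ⟨u, hu⟩
    exact h (concat_eq_concat hu).2

lemma sig_mul_apply_one (c : κ) (y : MonoidAlgebra k (FreeMonoid κ)) :
    (sig k c * y).coeff 1 = 0 := by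
  rw [sig_mul, MonoidAlgebra.coeff_mapDomain]
  refine Finsupp.mapDomain_notin_range _ _ ?_
  rintro ⟨u, hu⟩
  have := congrArg FreeMonoid.toList hu
  simp at this

lemma sig_mul_coeff_cons (c : κ) (y : MonoidAlgebra k (FreeMonoid κ)) (v : FreeMonoid κ) :
    (sig k c * y).coeff (FreeMonoid.of c * v) = y.coeff v := by
  rw [sig_mul, MonoidAlgebra.coeff_mapDomain, Finsupp.mapDomain_apply (mul_right_injective _)]

lemma sig_mul_coeff_ne (c : κ) (y : MonoidAlgebra k (FreeMonoid κ)) (w : FreeMonoid κ)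
    (hw : ∀ v, w ≠ FreeMonoid.of c * v) : (sig k c * y).coeff w = 0 := by
  rw [sig_mul, MonoidAlgebra.coeff_mapDomain]
  refine Finsupp.mapDomain_notin_range _ _ ?_
  rintro ⟨u, hu⟩
  exact hw u hu.symm


lemma single_concat_eq (u : FreeMonoid κ) (c : κ) (b : k) :
    (MonoidAlgebra.single (u * FreeMonoid.of c) b : MonoidAlgebra k (FreeMonoid κ)) =
      MonoidAlgebra.single u b * sig k c := by
  rw [sig, MonoidAlgebra.single_mul_single, mul_one]

lemma rho_single_concat_same (c : κ) (u : FreeMonoid κ) (b : k) :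
    rho c (MonoidAlgebra.single (u * FreeMonoid.of c) b : MonoidAlgebra k (FreeMonoid κ)) =
      MonoidAlgebra.single u b := by
  rw [single_concat_eq, rho_mul_sig_same]

lemma rho_single_concat_ne {c c' : κ} (h : c' ≠ c) (u : FreeMonoid κ) (b : k) :
    rho c (MonoidAlgebra.single (u * FreeMonoid.of c') b : MonoidAlgebra k (FreeMonoid κ)) = 0 := by
  rw [single_concat_eq, rho_mul_sig_ne h]

lemma rho_concat_same (c : κ) (f : MonoidAlgebra k (FreeMonoid κ)) (u : FreeMonoid κ) (b : k) :
    rho c (f * MonoidAlgebra.single (u * FreeMonoid.of c) b) = f * MonoidAlgebra.single u b := by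
  rw [single_concat_eq, ← mul_assoc, rho_mul_sig_same]

lemma rho_concat_ne {c c' : κ} (h : c' ≠ c) (f : MonoidAlgebra k (FreeMonoid κ))
    (u : FreeMonoid κ) (b : k) :
    rho c (f * MonoidAlgebra.single (u * FreeMonoid.of c') b) = 0 := by
  rw [single_concat_eq, ← mul_assoc, rho_mul_sig_ne h]

lemma rho_mul (c : κ) (f t : MonoidAlgebra k (FreeMonoid κ)) (ht : t.coeff 1 = 0) :
    rho c (f * t) = f * rho c t := by
  conv_lhs => rw [← MonoidAlgebra.sum_coeff_single t]
  conv_rhs => rw [← MonoidAlgebra.sum_coeff_single t]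
  rw [Finsupp.sum, Finset.mul_sum, map_sum, map_sum, Finset.mul_sum]
  refine Finset.sum_congr rfl fun w hw => ?_
  have hw1 : w ≠ 1 := by
    rintro rfl
    exact (Finsupp.mem_support_iff.mp hw) ht
  rcases eq_one_or_concat w with h1 | ⟨u, c', rfl⟩
  · exact absurd h1 hw1
  · by_cases h : c' = c
    · subst h
      rw [rho_concat_same, rho_single_concat_same]
    · rw [rho_concat_ne h, rho_single_concat_ne h, mul_zero]

lemma mul_single_one (f : MonoidAlgebra k (FreeMonoid κ)) (r : k) :
    f * MonoidAlgebra.single (1 : FreeMonoid κ) r = r • f := by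
  induction f using MonoidAlgebra.induction_linear with
  | zero => simp
  | add f g hf hg => rw [add_mul, hf, hg, smul_add]
  | single w b =>
    rw [MonoidAlgebra.single_mul_single, mul_one]
    rw [MonoidAlgebra.smul_single]
    rw [smul_eq_mul, mul_comm]

/-- reconstruction lemma: if all left-strips lie in `Z` and there is no constant term,
then the element lies in `SS * Z`. -/
lemma recmem (Z : Submodule k (MonoidAlgebra k (FreeMonoid κ))) :
    ∀ x : MonoidAlgebra k (FreeMonoid κ), x.coeff 1 = 0 → (∀ c, lam c x ∈ Z) →
      x ∈ SS k κ * Z := by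
  classical
  suffices H : ∀ n (x : MonoidAlgebra k (FreeMonoid κ)), x.coeff.support.card ≤ n →
      x.coeff 1 = 0 → (∀ c, lam c x ∈ Z) → x ∈ SS k κ * Z by
    intro x h1 h2
    exact H x.coeff.support.card x le_rfl h1 h2
  intro n
  induction n with
  | zero =>
    intro x hc _ _
    have hx : x = 0 := by
      rw [← MonoidAlgebra.coeff_eq_zero, ← Finsupp.support_eq_empty]
      exact Finset.card_eq_zero.mp (Nat.le_zero.mp hc)
    rw [hx]
    exact zero_mem _
  | succ n IH =>
    intro x hc h1 h2
    by_cases hx : x = 0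
    · rw [hx]; exact zero_mem _
    · obtain ⟨w₀, hw₀⟩ := Finsupp.support_nonempty_iff.mpr (mt MonoidAlgebra.coeff_eq_zero.mp hx)
      have hw₀mem : x.coeff w₀ ≠ 0 := Finsupp.mem_support_iff.mp hw₀
      have hw₀1 : w₀ ≠ 1 := fun h => hw₀mem (h ▸ h1)
      obtain ⟨c₀, u₀, hw₀eq⟩ := (eq_one_or_cons w₀).resolve_left hw₀1
      set y : MonoidAlgebra k (FreeMonoid κ) := sig k c₀ * lam c₀ x with hy
      set x' : MonoidAlgebra k (FreeMonoid κ) := x - y with hx'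
      have hycoeff : ∀ v, y.coeff (FreeMonoid.of c₀ * v) = x.coeff (FreeMonoid.of c₀ * v) := by
        intro v
        rw [hy, sig_mul_coeff_cons, lam_apply]
      have hsupp : x'.coeff.support ⊆ x.coeff.support.erase w₀ := by
        intro w hw
        rw [Finsupp.mem_support_iff] at hw
        rw [Finset.mem_erase, Finsupp.mem_support_iff]
        constructor
        · rintro rfl
          apply hw
          rw [hx', MonoidAlgebra.coeff_sub, Finsupp.sub_apply, hw₀eq, hycoeff, sub_self]
        · intro hxw
          apply hw
          rw [hx', MonoidAlgebra.coeff_sub, Finsupp.sub_apply, hxw]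
          rcases Classical.em (∃ v, w = FreeMonoid.of c₀ * v) with ⟨v, rfl⟩ | hne
          · rw [hycoeff, hxw, sub_self]
          · rw [hy, sig_mul_coeff_ne _ _ _ (fun v hv => hne ⟨v, hv⟩), sub_zero]
      have hcard : x'.coeff.support.card ≤ n := by
        have h5 : (x.coeff.support.erase w₀).card < x.coeff.support.card := Finset.card_erase_lt_of_mem hw₀
        have := Finset.card_le_card hsupp
        omega
      have hx'1 : x'.coeff 1 = 0 := by
        rw [hx', MonoidAlgebra.coeff_sub, Finsupp.sub_apply, h1, hy, sig_mul_apply_one, sub_zero]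
      have hx'lam : ∀ c, lam c x' ∈ Z := by
        intro c
        rw [hx', map_sub]
        by_cases h : c₀ = c
        · subst h
          rw [hy, lam_sig_mul_same]
          exact sub_mem (h2 _) (h2 _)
        · rw [hy, lam_sig_mul_ne h, sub_zero]
          exact h2 _
      have hx'mem : x' ∈ SS k κ * Z := IH x' hcard hx'1 hx'lam
      have : x = x' + y := by rw [hx']; abel
      rw [this]
      exact add_mem hx'mem (mul_mem_mul (sig_mem_SS c₀) (h2 c₀))

lemma eps_zero_of_mem_mul {Z : Submodule k (MonoidAlgebra k (FreeMonoid κ))}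
    {x : MonoidAlgebra k (FreeMonoid κ)} (hx : x ∈ SS k κ * Z) :
    x.coeff 1 = 0 ∧ ∀ c, lam c x ∈ Z := by
  set Q : Submodule k (MonoidAlgebra k (FreeMonoid κ)) :=
    LinearMap.ker (Finsupp.lapply (1 : FreeMonoid κ) ∘ₗ
      (MonoidAlgebra.coeffLinearEquiv k).toLinearMap) ⊓ ⨅ c : κ, Z.comap (lam c) with hQ
  have hmemQ : ∀ z : MonoidAlgebra k (FreeMonoid κ),
      z ∈ Q ↔ z.coeff 1 = 0 ∧ ∀ c, lam c z ∈ Z := by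
    intro z
    rw [hQ, Submodule.mem_inf, LinearMap.mem_ker, Submodule.mem_iInf]
    constructor
    · rintro ⟨ha, hb⟩
      exact ⟨ha, fun c => Submodule.mem_comap.mp (hb c)⟩
    · rintro ⟨ha, hb⟩
      exact ⟨ha, fun c => Submodule.mem_comap.mpr (hb c)⟩
  suffices hle : SS k κ * Z ≤ Q by
    exact (hmemQ x).mp (hle hx)
  rw [Submodule.mul_le]
  intro s hs
  induction hs using Submodule.span_induction with
  | mem s hsm =>
    obtain ⟨c, rfl⟩ := hsm
    intro z hz
    rw [hmemQ]
    refine ⟨sig_mul_apply_one c z, fun c' => ?_⟩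
    by_cases h : c = c'
    · subst h
      rw [lam_sig_mul_same]
      exact hz
    · rw [lam_sig_mul_ne h]
      exact Z.zero_mem
  | zero =>
    intro z hz
    rw [zero_mul]
    exact Q.zero_mem
  | add a b _ _ ha hb =>
    intro z hz
    rw [add_mul]
    exact Q.add_mem (ha z hz) (hb z hz)
  | smul r a _ ha =>
    intro z hz
    rw [smul_mul_assoc]
    exact Q.smul_mem r (ha z hz)

lemma peel_inf2 (A B : Submodule k (MonoidAlgebra k (FreeMonoid κ))) :
    (SS k κ * A) ⊓ (SS k κ * B) ≤ SS k κ * (A ⊓ B) := by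
  intro x hx
  rw [Submodule.mem_inf] at hx
  obtain ⟨h1, hA⟩ := eps_zero_of_mem_mul hx.1
  obtain ⟨-, hB⟩ := eps_zero_of_mem_mul hx.2
  exact recmem _ x h1 fun c => Submodule.mem_inf.mpr ⟨hA c, hB c⟩

lemma peel_iInf {ι : Type*} [Nonempty ι] (X : ι → Submodule k (MonoidAlgebra k (FreeMonoid κ))) :
    (⨅ j, SS k κ * X j) ≤ SS k κ * (⨅ j, X j) := by
  intro x hx
  rw [Submodule.mem_iInf] at hx
  have h := fun j => eps_zero_of_mem_mul (hx j)
  exact recmem _ x (h (Classical.arbitrary ι)).1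
    fun c => (Submodule.mem_iInf _).mpr fun j => (h j).2 c


section rep

variable {R' : Submodule k (MonoidAlgebra k (FreeMonoid κ))} {ι : Type*}

/-- existence of coordinates for elements of `R' * X` relative to a basis of `R'` -/
lemma mem_mul_rep (b : Module.Basis ι k ↥R') (X : Submodule k (MonoidAlgebra k (FreeMonoid κ)))
    {x : MonoidAlgebra k (FreeMonoid κ)} (hx : x ∈ R' * X) :
    ∃ t : ι →₀ MonoidAlgebra k (FreeMonoid κ), (∀ α, t α ∈ X) ∧
      x = t.sum fun α y => ((b α : MonoidAlgebra k (FreeMonoid κ)) * y) := by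
  refine Submodule.mul_induction_on hx ?_ ?_
  · intro m hm z hz
    refine ⟨(b.repr ⟨m, hm⟩).mapRange (fun cc => cc • z) (zero_smul _ _), fun α => ?_, ?_⟩
    · rw [Finsupp.mapRange_apply]
      exact X.smul_mem _ hz
    · rw [Finsupp.sum_mapRange_index (fun α => by rw [mul_zero])]
      have h1 : ∀ (α : ι) (cc : k),
          (b α : MonoidAlgebra k (FreeMonoid κ)) * (cc • z)
            = (cc • (b α : MonoidAlgebra k (FreeMonoid κ))) * z := by
        intro α cc
        rw [mul_smul_comm, smul_mul_assoc]
      have h2 : ((b.repr ⟨m, hm⟩).sum fun α cc =>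
          (b α : MonoidAlgebra k (FreeMonoid κ)) * (cc • z))
          = ((b.repr ⟨m, hm⟩).sum fun α cc =>
            (cc • (b α : MonoidAlgebra k (FreeMonoid κ)))) * z := by
        rw [Finsupp.sum, Finsupp.sum, Finset.sum_mul]
        exact Finset.sum_congr rfl fun α _ => h1 α _
      rw [h2]
      have h3 : ((b.repr ⟨m, hm⟩).sum fun α cc =>
          (cc • (b α : MonoidAlgebra k (FreeMonoid κ)))) = m := by
        have h4 := b.linearCombination_repr (⟨m, hm⟩ : ↥R')
        have h5 := congrArg (R'.subtype) h4
        rw [Finsupp.linearCombination_apply] at h5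
        rw [map_finsuppSum] at h5
        simpa using h5
      rw [h3]
  · rintro a b' ⟨t₁, ht₁, rfl⟩ ⟨t₂, ht₂, rfl⟩
    refine ⟨t₁ + t₂, fun α => ?_, ?_⟩
    · rw [Finsupp.add_apply]
      exact X.add_mem (ht₁ α) (ht₂ α)
    · rw [Finsupp.sum_add_index' (fun α => by rw [mul_zero]) (fun α y₁ y₂ => mul_add _ _ _)]

/-- the key freeness lemma: elements of a basis of `R'` are left-`T`-independent. -/
lemma claimL (b : Module.Basis ι k ↥R')
    (hRB : R' ⊓ R' * (SS k κ * ⊤) = ⊥) :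
    ∀ t : ι →₀ MonoidAlgebra k (FreeMonoid κ),
      (t.sum fun α y => (b α : MonoidAlgebra k (FreeMonoid κ)) * y) = 0 → t = 0 := by
  classical
  have hli : LinearIndependent k (fun α => (b α : MonoidAlgebra k (FreeMonoid κ))) :=
    b.linearIndependent.map' R'.subtype (Submodule.ker_subtype R')
  suffices H : ∀ D (t : ι →₀ MonoidAlgebra k (FreeMonoid κ)),
      (∀ α w, w ∈ (t α).coeff.support → (FreeMonoid.toList w).length < D) →
      (t.sum fun α y => (b α : MonoidAlgebra k (FreeMonoid κ)) * y) = 0 → t = 0 by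
    intro t ht
    refine H (1 + t.support.sup fun α => (t α).coeff.support.sup fun w => (FreeMonoid.toList w).length)
      t ?_ ht
    intro α w hw
    by_cases hα : α ∈ t.support
    · have hb1 : (FreeMonoid.toList w).length ≤
          (t α).coeff.support.sup (fun w => (FreeMonoid.toList w).length) := Finset.le_sup hw
      have hb2 : (t α).coeff.support.sup (fun w => (FreeMonoid.toList w).length) ≤
          t.support.sup fun α => (t α).coeff.support.sup fun w => (FreeMonoid.toList w).length :=
        Finset.le_sup (f := fun α => (t α).coeff.support.sup fun w => (FreeMonoid.toList w).length) hα
      omega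
    · rw [Finsupp.notMem_support_iff.mp hα] at hw
      simp at hw
  intro D
  induction D with
  | zero =>
    intro t hbound _
    refine Finsupp.ext fun α => ?_
    have : (t α).coeff.support = ∅ := by
      rw [Finset.eq_empty_iff_forall_notMem]
      intro w hw
      exact Nat.not_lt_zero _ (hbound α w hw)
    rw [show (0 : ι →₀ MonoidAlgebra k (FreeMonoid κ)) α = 0 from rfl]
    exact MonoidAlgebra.coeff_eq_zero.mp (Finsupp.support_eq_empty.mp this)
  | succ D IH =>
    intro t hbound heq
    -- step 1 : no constant terms
    have step1 : ∀ α, (t α).coeff 1 = 0 := by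
      set ζ : MonoidAlgebra k (FreeMonoid κ) :=
        t.sum (fun α y => (y.coeff 1) • (b α : MonoidAlgebra k (FreeMonoid κ))) with hζ
      have hXi : (t.sum fun α y => (b α : MonoidAlgebra k (FreeMonoid κ)) *
          (y - MonoidAlgebra.single 1 (y.coeff 1))) ∈ R' * (SS k κ * ⊤) := by
        refine Submodule.sum_mem _ fun α hα => ?_
        refine mul_mem_mul (b α).2 ?_
        refine recmem _ _ ?_ (fun c' => trivial)
        rw [MonoidAlgebra.coeff_sub, Finsupp.sub_apply]
        rw [show (MonoidAlgebra.single (1:FreeMonoid κ) ((t α).coeff 1)).coeff 1 = (t α).coeff 1 from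
          Finsupp.single_eq_same]
        exact sub_self _
      have hEQ : ζ + (t.sum fun α y => (b α : MonoidAlgebra k (FreeMonoid κ)) *
          (y - MonoidAlgebra.single 1 (y.coeff 1))) = 0 := by
        rw [hζ, ← Finsupp.sum_add]
        rw [← heq]
        refine Finsupp.sum_congr fun α _ => ?_
        rw [mul_sub, mul_single_one]
        abel
      have hζR : ζ ∈ R' := by
        refine Submodule.sum_mem _ fun α hα => Submodule.smul_mem _ _ (b α).2
      have hζmem : ζ ∈ R' ⊓ R' * (SS k κ * ⊤) := by
        refine Submodule.mem_inf.mpr ⟨hζR, ?_⟩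
        have h9 : ζ = -(t.sum fun α y => (b α : MonoidAlgebra k (FreeMonoid κ)) *
            (y - MonoidAlgebra.single 1 (y.coeff 1))) := eq_neg_of_add_eq_zero_left hEQ
        rw [h9]
        exact neg_mem hXi
      rw [hRB, Submodule.mem_bot] at hζmem
      have hζ' : (∑ α ∈ t.support, ((t α).coeff 1) • ((b α : MonoidAlgebra k (FreeMonoid κ)))) = 0 :=
        hζmem
      intro α
      by_cases hα : α ∈ t.support
      · exact linearIndependent_iff'.mp hli t.support (fun α => (t α).coeff 1) hζ' α hα
      · rw [Finsupp.notMem_support_iff.mp hα]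
        rfl
    -- step 2 : strip last letters
    have step3 : ∀ c₀ α, rho c₀ (t α) = 0 := by
      intro c₀
      have step2 : ((t.mapRange (fun y => rho c₀ y) (map_zero _)).sum
          fun α y => (b α : MonoidAlgebra k (FreeMonoid κ)) * y) = 0 := by
        rw [Finsupp.sum_mapRange_index (fun α => by rw [mul_zero])]
        have h6 : (t.sum fun α y => (b α : MonoidAlgebra k (FreeMonoid κ)) * rho c₀ y)
            = rho c₀ (t.sum fun α y => (b α : MonoidAlgebra k (FreeMonoid κ)) * y) := by
          rw [map_finsuppSum]
          exact Finsupp.sum_congr fun α _ => (rho_mul c₀ _ _ (step1 α)).symm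
        rw [h6, heq, map_zero]
      have h7 := IH (t.mapRange (fun y => rho c₀ y) (map_zero _)) ?_ step2
      · intro α
        have := congrArg (fun z => z α) h7
        simpa [Finsupp.mapRange_apply] using this
      · intro α w hw
        rw [Finsupp.mapRange_apply] at hw
        have hw2 : w * FreeMonoid.of c₀ ∈ (t α).coeff.support := by
          rw [Finsupp.mem_support_iff] at hw ⊢
          rw [rho_apply] at hw
          exact hw
        have := hbound α _ hw2
        have hlen : (FreeMonoid.toList (w * FreeMonoid.of c₀)).length
            = (FreeMonoid.toList w).length + 1 := by
          rw [FreeMonoid.toList_mul, List.length_append, FreeMonoid.toList_of]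
          rfl
        omega
    -- conclude
    refine Finsupp.ext fun α => MonoidAlgebra.ext (Finsupp.ext fun w => ?_)
    rw [show ((0 : ι →₀ MonoidAlgebra k (FreeMonoid κ)) α).coeff w = 0 from rfl]
    rcases eq_one_or_concat w with rfl | ⟨u, c₀, rfl⟩
    · exact step1 α
    · have h8 := congrArg (fun z => z.coeff u) (step3 c₀ α)
      simpa [rho_apply] using h8

/-- the powers of `R'` inherit the disjointness property -/
lemma pow_inf (hRB : R' ⊓ R' * (SS k κ * ⊤) = ⊥) :
    ∀ i : ℕ, 1 ≤ i → R' ^ i ⊓ R' ^ i * (SS k κ * ⊤) = ⊥ := by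
  obtain ⟨s, ⟨b⟩⟩ := Module.Basis.exists_basis k ↥R'
  intro i hi
  induction i, hi using Nat.le_induction with
  | base => rw [pow_one]; exact hRB
  | succ i hi IH =>
    rw [eq_bot_iff]
    intro x hx
    rw [Submodule.mem_inf] at hx
    obtain ⟨hx1, hx2⟩ := hx
    rw [pow_succ'] at hx1 hx2
    rw [mul_assoc] at hx2
    obtain ⟨t, htX, hteq⟩ := mem_mul_rep b _ hx1
    obtain ⟨t', htX', hteq'⟩ := mem_mul_rep b _ hx2
    have hsub : ((t - t').sum fun α y => (b α : MonoidAlgebra k (FreeMonoid κ)) * y) = 0 := by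
      rw [Finsupp.sum_sub_index (fun α y₁ y₂ => mul_sub _ _ _)]
      rw [← hteq, ← hteq', sub_self]
    have h0 := claimL b hRB _ hsub
    have ht' : t = t' := sub_eq_zero.mp h0
    have hzero : ∀ α, t α = 0 := by
      intro α
      have hmem : t α ∈ R' ^ i ⊓ R' ^ i * (SS k κ * ⊤) :=
        Submodule.mem_inf.mpr ⟨htX α, ht' ▸ htX' α⟩
      rw [IH, Submodule.mem_bot] at hmem
      exact hmem
    have ht0 : t = 0 := Finsupp.ext fun α => hzero α
    rw [Submodule.mem_bot, hteq, ht0]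
    exact Finsupp.sum_zero_index

end rep


/-- independence criterion: disjointness from the tail suffices (for ℕ-indexed families) -/
lemma indep_of_tail {W : Type*} [AddCommGroup W] [Module k W] (f : ℕ → Submodule k W)
    (h : ∀ N, f N ⊓ (⨆ M, ⨆ _ : N < M, f M) = ⊥) : iSupIndep f := by
  classical
  have ZS : ∀ s : Finset ℕ, ∀ y : ℕ → W, (∀ M ∈ s, y M ∈ f M) → (∑ M ∈ s, y M) = 0 →
      ∀ M ∈ s, y M = 0 := by
    intro s
    induction s using Finset.strongInduction with
    | _ s IH =>
      intro y hy hsum M hM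
      have hne : s.Nonempty := ⟨M, hM⟩
      set m := s.min' hne with hm'
      have hm : m ∈ s := s.min'_mem hne
      have hsplit : y m + ∑ M ∈ s.erase m, y M = 0 := by
        rw [Finset.add_sum_erase _ _ hm]
        exact hsum
      have hym : y m = 0 := by
        have hmem : y m ∈ f m ⊓ (⨆ M, ⨆ _ : m < M, f M) := by
          refine Submodule.mem_inf.mpr ⟨hy m hm, ?_⟩
          have hneg : y m = -∑ M ∈ s.erase m, y M := eq_neg_of_add_eq_zero_left hsplit
          rw [hneg]
          refine neg_mem (Submodule.sum_mem _ fun M' hM' => ?_)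
          have hlt : m < M' :=
            lt_of_le_of_ne (s.min'_le M' (Finset.mem_of_mem_erase hM'))
              (Ne.symm (Finset.ne_of_mem_erase hM'))
          exact Submodule.mem_iSup_of_mem M'
            (Submodule.mem_iSup_of_mem hlt (hy M' (Finset.mem_of_mem_erase hM')))
        rw [h m, Submodule.mem_bot] at hmem
        exact hmem
      by_cases hMm : M = m
      · rw [hMm]; exact hym
      · have hsum' : ∑ M ∈ s.erase m, y M = 0 := by
          rw [hym, zero_add] at hsplit
          exact hsplit
        exact IH (s.erase m) (Finset.erase_ssubset hm) y
          (fun M' hM' => hy M' (Finset.mem_of_mem_erase hM')) hsum' M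
          (Finset.mem_erase.mpr ⟨hMm, hM⟩)
  intro N
  rw [disjoint_iff, eq_bot_iff]
  intro x hx
  rw [Submodule.mem_inf] at hx
  obtain ⟨hx1, hx2⟩ := hx
  rw [iSup_subtype'] at hx2
  rw [Submodule.mem_iSup_iff_exists_finsupp] at hx2
  obtain ⟨a, ha, hsum⟩ := hx2
  set y : ℕ → W := fun M => if hM : M = N then -x else a ⟨M, hM⟩ with hy
  have hNim : N ∉ a.support.image Subtype.val := by
    intro hmem
    rw [Finset.mem_image] at hmem
    obtain ⟨β, hβ, hβ2⟩ := hmem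
    exact β.2 hβ2
  set s : Finset ℕ := insert N (a.support.image Subtype.val) with hs
  have hmem : ∀ M ∈ s, y M ∈ f M := by
    intro M hM
    rw [hs, Finset.mem_insert] at hM
    by_cases hMN : M = N
    · subst hMN
      rw [hy]
      simp only [dif_pos rfl]
      exact neg_mem hx1
    · rcases hM with hM | hM
      · exact absurd hM hMN
      · rw [Finset.mem_image] at hM
        obtain ⟨β, hβ, hβ2⟩ := hM
        rw [hy]
        simp only [dif_neg hMN]
        have hβ3 : β = ⟨M, hMN⟩ := Subtype.ext hβ2
        rw [← hβ3]
        have := ha β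
        rw [hβ2] at this
        exact this
  have hsum0 : ∑ M ∈ s, y M = 0 := by
    rw [hs, Finset.sum_insert hNim]
    have himg : ∑ M ∈ a.support.image Subtype.val, y M = ∑ β ∈ a.support, a β := by
      rw [Finset.sum_image (fun β _ β' _ hββ' => Subtype.val_injective hββ')]
      refine Finset.sum_congr rfl fun β hβ => ?_
      rw [hy]
      simp only [dif_neg β.2]
    rw [himg]
    have : (a.sum fun _ v => v) = ∑ β ∈ a.support, a β := rfl
    rw [this] at hsum
    rw [hsum, hy]
    simp only [dif_pos rfl]
    exact neg_add_cancel x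
  have := ZS s y hmem hsum0 N (by rw [hs]; exact Finset.mem_insert_self _ _)
  rw [hy] at this
  simp only [dif_pos rfl] at this
  rw [Submodule.mem_bot]
  exact neg_eq_zero.mp this

/-- the main theorem, in the free monoid algebra -/
theorem mainF (R' : Submodule k (MonoidAlgebra k (FreeMonoid κ)))
    (hR' : R' ⊓ ((SS k κ * ⊤) * R' * ⊤ + ⊤ * R' * (SS k κ * ⊤)) = ⊥)
    (i : ℕ) (hi : 1 ≤ i) :
    iSupIndep (fun N : ℕ =>
      ⨅ j : Fin (N + 1), SS k κ ^ (j : ℕ) * R' ^ i * SS k κ ^ (N - (j : ℕ))) := by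
  have hR2 : R' ⊓ R' * (SS k κ * ⊤) = ⊥ := by
    rw [eq_bot_iff]
    refine le_trans (inf_le_inf_left _ ?_) hR'.le
    refine le_sup_of_le_right ?_
    have h1 : R' * (SS k κ * ⊤) = (1 : Submodule k (MonoidAlgebra k (FreeMonoid κ))) * R'
        * (SS k κ * ⊤) := by
      rw [one_mul]
    rw [h1]
    exact mul_le_mul' (mul_le_mul' le_top le_rfl) le_rfl
  have hQ : R' ^ i ⊓ R' ^ i * (SS k κ * ⊤) = ⊥ := pow_inf hR2 i hi
  set Q := R' ^ i with hQdef
  set g : ℕ → Submodule k (MonoidAlgebra k (FreeMonoid κ)) :=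
    fun N => ⨅ j : Fin (N + 1), SS k κ ^ (j : ℕ) * Q * SS k κ ^ (N - (j : ℕ)) with hg
  have g0 : g 0 = Q := by
    have hpt : ∀ j : Fin 1, SS k κ ^ (j : ℕ) * Q * SS k κ ^ (0 - (j : ℕ)) = Q := by
      intro j
      have hj : (j : ℕ) = 0 := by omega
      rw [hj]
      simp
    have h00 : g 0 = ⨅ j : Fin 1, SS k κ ^ (j : ℕ) * Q * SS k κ ^ (0 - (j : ℕ)) := rfl
    rw [h00, iInf_congr hpt, iInf_const]
  have gmono : ∀ N, g (N + 1) ≤ SS k κ * g N := by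
    intro N
    have h1 : g (N + 1) ≤ ⨅ j : Fin (N + 1),
        SS k κ * (SS k κ ^ (j : ℕ) * Q * SS k κ ^ (N - (j : ℕ))) := by
      refine le_iInf fun j => ?_
      have h2 := iInf_le (fun j' : Fin (N + 2) =>
        SS k κ ^ (j' : ℕ) * Q * SS k κ ^ (N + 1 - (j' : ℕ))) j.succ
      refine le_trans h2 (le_of_eq ?_)
      have hj : ((j.succ : Fin (N + 2)) : ℕ) = (j : ℕ) + 1 := by
        rw [Fin.val_succ]
      rw [hj, Nat.succ_sub_succ, pow_succ', mul_assoc (SS k κ), mul_assoc (SS k κ)]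
    exact le_trans h1 (peel_iInf _)
  have tail : ∀ N, g N ⊓ (⨆ M, ⨆ _ : N < M, g M) = ⊥ := by
    intro N
    induction N with
    | zero =>
      rw [g0, eq_bot_iff]
      have hle : (⨆ M, ⨆ _ : 0 < M, g M) ≤ Q * (SS k κ * ⊤) := by
        refine iSup_le fun M => iSup_le fun hM => ?_
        obtain ⟨M', rfl⟩ : ∃ M', M = M' + 1 := ⟨M - 1, by omega⟩
        have h3 : g (M' + 1) ≤ SS k κ ^ (0 : ℕ) * Q * SS k κ ^ (M' + 1 - 0) :=
          iInf_le _ (⟨0, by omega⟩ : Fin (M' + 2))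
        have h4 : SS k κ ^ (0 : ℕ) * Q * SS k κ ^ (M' + 1 - 0) = Q * SS k κ ^ (M' + 1) := by
          rw [pow_zero, one_mul, Nat.sub_zero]
        have h5 : Q * SS k κ ^ (M' + 1) ≤ Q * (SS k κ * ⊤) := by
          refine mul_le_mul' le_rfl ?_
          rw [pow_succ']
          exact mul_le_mul' le_rfl le_top
        exact le_trans h3 (le_trans (le_of_eq h4) h5)
      exact le_trans (inf_le_inf_left _ hle) hQ.le
    | succ N IHN =>
      have h2 : (⨆ M, ⨆ _ : N + 1 < M, g M) ≤ SS k κ * (⨆ M, ⨆ _ : N < M, g M) := by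
        refine iSup_le fun M => iSup_le fun hM => ?_
        obtain ⟨M', rfl⟩ : ∃ M', M = M' + 1 := ⟨M - 1, by omega⟩
        refine le_trans (gmono M') (mul_le_mul' le_rfl ?_)
        have hlt : N < M' := by omega
        exact le_trans (le_refl (g M')) (le_iSup_of_le M' (le_iSup_of_le hlt le_rfl))
      rw [eq_bot_iff]
      refine le_trans (inf_le_inf (gmono N) h2) ?_
      refine le_trans (peel_inf2 _ _) ?_
      rw [IHN, Submodule.mul_bot]
  exact indep_of_tail g tail


section transfer

variable {A : Type*} [Ring A] [Algebra k A]
variable (e : A ≃ₐ[k] MonoidAlgebra k (FreeMonoid κ))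

lemma mapE_coe (p : Submodule k A) :
    p.map ((e : A →ₐ[k] MonoidAlgebra k (FreeMonoid κ)) :
      A →ₐ[k] MonoidAlgebra k (FreeMonoid κ)).toLinearMap = p.map e.toLinearMap := by
  have hfun : ∀ y : A,
      ((e : A →ₐ[k] MonoidAlgebra k (FreeMonoid κ))).toLinearMap y = e.toLinearMap y := fun y => by
    simp
  ext x
  simp only [Submodule.mem_map, hfun]

lemma mapE_mul (p q : Submodule k A) :
    (p * q).map e.toLinearMap = p.map e.toLinearMap * q.map e.toLinearMap := by
  have h := Submodule.map_mul (M := p) (N := q)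
    (e : A →ₐ[k] MonoidAlgebra k (FreeMonoid κ))
  rwa [mapE_coe, mapE_coe, mapE_coe] at h

lemma mapE_pow (p : Submodule k A) (n : ℕ) :
    (p ^ n).map e.toLinearMap = p.map e.toLinearMap ^ n := by
  have h := Submodule.map_pow (M := p) (e : A →ₐ[k] MonoidAlgebra k (FreeMonoid κ)) n
  rwa [mapE_coe, mapE_coe] at h

lemma mapE_inf (p q : Submodule k A) :
    (p ⊓ q).map e.toLinearMap = p.map e.toLinearMap ⊓ q.map e.toLinearMap :=
  Submodule.map_inf e.toLinearMap e.injective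

lemma mapE_top : (⊤ : Submodule k A).map e.toLinearMap = ⊤ := by
  rw [Submodule.map_top, LinearMap.range_eq_top]
  exact e.surjective

lemma mapE_iInf {ι : Sort*} (X : ι → Submodule k A) :
    (⨅ j, X j).map e.toLinearMap = ⨅ j, (X j).map e.toLinearMap := by
  apply le_antisymm
  · exact le_iInf fun j => Submodule.map_mono (iInf_le _ j)
  · intro x hx
    rw [Submodule.mem_iInf] at hx
    obtain ⟨y, rfl⟩ : ∃ y, e.toLinearMap y = x := by
      obtain ⟨w, hw⟩ := e.surjective x
      exact ⟨w, by simpa using hw⟩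
    refine Submodule.mem_map_of_mem (Submodule.mem_iInf _ |>.mpr fun j => ?_)
    have hj := hx j
    rw [Submodule.mem_map] at hj
    obtain ⟨z, hz, hze⟩ := hj
    have hzy : z = y := by
      apply e.injective
      have h1 : e.toLinearMap z = e z := by simp
      have h2 : e.toLinearMap y = e y := by simp
      rw [← h1, ← h2, hze]
    exact hzy ▸ hz

end transfer


end PIIproof

open Submodule in
/-- Let `R ⊆ T(V)` satisfy the space-of-relations condition
`R ∩ (T(V)_{>0}·R·T(V) + T(V)·R·T(V)_{>0}) = 0`, and let `R^{(i)}` denote the `i`-fold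
product of `R` inside `T(V)` (formalized as the submodule power `R ^ i`), and
`V^{(j)}` the `j`-fold product of the degree-one subspace.  Then for each `i ≥ 1` the
family `{ ⋂_{j=0}^{N} V^{(j)}·R^{(i)}·V^{(N-j)} }_{N ≥ 0}` of subspaces of `T(V)` is
independent, i.e. their sum is direct.  `T(V)_{>0}` is formalized as `V·T(V)`. -/
theorem partition_intersections_independent
    {k V : Type*} [Field k] [AddCommGroup V] [Module k V]
    (R : Submodule k (TensorAlgebra k V))
    (hR : R ⊓ ((LinearMap.range (TensorAlgebra.ι k (M := V)) * ⊤) * R * ⊤ +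
        ⊤ * R * (LinearMap.range (TensorAlgebra.ι k (M := V)) * ⊤)) = ⊥) :
    ∀ i : ℕ, 1 ≤ i →
      iSupIndep (fun N : ℕ =>
        ⨅ j : Fin (N + 1),
          LinearMap.range (TensorAlgebra.ι k (M := V)) ^ (j : ℕ) * R ^ i *
            LinearMap.range (TensorAlgebra.ι k (M := V)) ^ (N - (j : ℕ))) := by
  intro i hi
  classical
  set e : TensorAlgebra k V ≃ₐ[k]
      MonoidAlgebra k (FreeMonoid (Module.Basis.ofVectorSpaceIndex k V)) :=
    (TensorAlgebra.equivFreeAlgebra (Module.Basis.ofVectorSpace k V)).trans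
      FreeAlgebra.equivMonoidAlgebraFreeMonoid with he
  set f := e.toLinearMap with hf
  set S : Submodule k (TensorAlgebra k V) :=
    LinearMap.range (TensorAlgebra.ι k (M := V)) with hSdef
  -- the image of the degree-one part is the span of the letters
  have hS : S.map f = PIIproof.SS k (Module.Basis.ofVectorSpaceIndex k V) := by
    have h1 : S = Submodule.span k
        (Set.range fun α => TensorAlgebra.ι k ((Module.Basis.ofVectorSpace k V) α)) := by
      rw [hSdef, LinearMap.range_eq_map, ← (Module.Basis.ofVectorSpace k V).span_eq,
        Submodule.map_span, ← Set.range_comp]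
      rfl
    rw [h1, Submodule.map_span, ← Set.range_comp, PIIproof.SS]
    apply congrArg
    apply congrArg
    funext α
    show e (TensorAlgebra.ι k ((Module.Basis.ofVectorSpace k V) α)) = PIIproof.sig k α
    rw [he, AlgEquiv.trans_apply, TensorAlgebra.equivFreeAlgebra_ι_apply]
    rw [PIIproof.sig]
    simp [FreeAlgebra.equivMonoidAlgebraFreeMonoid]
  set R' := R.map f with hR'def
  -- transfer the hypothesis
  have hRtrans : R' ⊓ ((PIIproof.SS k (Module.Basis.ofVectorSpaceIndex k V) * ⊤) * R' * ⊤ +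
      ⊤ * R' * (PIIproof.SS k (Module.Basis.ofVectorSpaceIndex k V) * ⊤)) = ⊥ := by
    have h2 := congrArg (Submodule.map f) hR
    rw [Submodule.map_bot] at h2
    rw [PIIproof.mapE_inf e] at h2
    rw [Submodule.add_eq_sup, Submodule.map_sup] at h2
    rw [PIIproof.mapE_mul e, PIIproof.mapE_mul e, PIIproof.mapE_mul e,
      PIIproof.mapE_mul e, PIIproof.mapE_mul e, PIIproof.mapE_mul e,
      PIIproof.mapE_top e, hS] at h2
    rw [← Submodule.add_eq_sup] at h2
    exact h2
  have main := PIIproof.mainF R' hRtrans i hi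
  -- transfer the conclusion
  refine (iSupIndep_map_orderIso_iff
    (Submodule.orderIsoMapComap e.toLinearEquiv)).mp ?_
  have hbr : ∀ p : Submodule k (TensorAlgebra k V),
      (Submodule.orderIsoMapComap e.toLinearEquiv) p = p.map f := by
    intro p
    rw [Submodule.orderIsoMapComap_apply]
  have hcomp : (⇑(Submodule.orderIsoMapComap e.toLinearEquiv) ∘ fun N : ℕ =>
      ⨅ j : Fin (N + 1), S ^ (j : ℕ) * R ^ i * S ^ (N - (j : ℕ)))
      = (fun N : ℕ => ⨅ j : Fin (N + 1),
          PIIproof.SS k (Module.Basis.ofVectorSpaceIndex k V) ^ (j : ℕ) * R' ^ i *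
            PIIproof.SS k (Module.Basis.ofVectorSpaceIndex k V) ^ (N - (j : ℕ))) := by
    funext N
    rw [Function.comp_apply, hbr, PIIproof.mapE_iInf e]
    refine iInf_congr fun j => ?_
    rw [PIIproof.mapE_mul e, PIIproof.mapE_mul e, PIIproof.mapE_pow e,
      PIIproof.mapE_pow e, PIIproof.mapE_pow e, hS]
  rw [hcomp]
  exact main
end
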